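/- arXiv:2402.17142 — 9 statements merged into one kernel-verified Lean document; each statement's English description precedes it below -/
import Mathlib

section
/- Let τ be an experiment (a probability measure on CDFs on Θ whose barycenter is the prior F, i.e., ∫ G(x) dτ(G) = F(x) for all x), and let χ be a measurable selection with χ(G) ∈ X(G) for all G, where X(G) is the set of q-quantiles of G. If H is the pushforward distribution of χ under τ, then for all x ∈ Θ, H(x) ≤ F(x)/q. -/
open MeasureTheory Set Filter

noncomputable section

/-- A CDF on `[a,b]`: nondecreasing, right-continuous, `0` below `a`, `1` from `b` on. -/
def IsCDF (a b : ℝ) (G : ℝ → ℝ) : Prop :=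
  Monotone G ∧ (∀ x : ℝ, ContinuousWithinAt G (Set.Ici x) x) ∧
    (∀ x : ℝ, x < a → G x = 0) ∧ (∀ x : ℝ, b ≤ x → G x = 1)

/-- The set of `q`-quantiles of `G` on `[a,b]`. -/
def QSet (a b q : ℝ) (G : ℝ → ℝ) : Set ℝ :=
  {x | x ∈ Set.Icc a b ∧ Function.leftLim G x ≤ q ∧ q ≤ G x}

/-- Generalized inverse `G⁻¹(p) = inf {θ ∈ [a,b] : G θ ≥ p}`. -/
def ginv (a b : ℝ) (G : ℝ → ℝ) (p : ℝ) : ℝ :=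
  sInf {θ | θ ∈ Set.Icc a b ∧ p ≤ G θ}

/-- any implemented distribution of posterior `q`-quantiles satisfies
`H(x) ≤ F(x)/q`. -/
theorem implemented_le_upper_bound (a b q : ℝ) (hab : a < b)
    (hq : q ∈ Set.Ioo (0 : ℝ) 1) (F : ℝ → ℝ) (hF : IsCDF a b F)
    (τ : Measure {G : ℝ → ℝ // IsCDF a b G}) [IsProbabilityMeasure τ]
    (hbary : ∀ x : ℝ, (∫ G, (G : {G : ℝ → ℝ // IsCDF a b G}).1 x ∂τ) = F x)
    (χ : {G : ℝ → ℝ // IsCDF a b G} → ℝ) (hχmeas : Measurable χ)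
    (hχsel : ∀ G : {G : ℝ → ℝ // IsCDF a b G}, χ G ∈ QSet a b q G.1)
    (H : ℝ → ℝ) (hH : ∀ x : ℝ, H x = (τ {G | χ G ≤ x}).toReal) :
    ∀ x ∈ Set.Icc a b, H x ≤ F x / q := by
  intro x hx
  set A : Set {G : ℝ → ℝ // IsCDF a b G} := {G | χ G ≤ x} with hA
  have hAmeas : MeasurableSet A := hχmeas measurableSet_Iic
  have hmeas : Measurable fun G : {G : ℝ → ℝ // IsCDF a b G} => G.1 x :=
    (measurable_pi_apply x).comp measurable_subtype_coe
  have hbounds : ∀ G : {G : ℝ → ℝ // IsCDF a b G}, 0 ≤ G.1 x ∧ G.1 x ≤ 1 := by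
    intro G
    obtain ⟨hmono, _, h0, h1⟩ := G.2
    constructor
    · rcases le_or_gt a x with h | h
      · have := hmono (le_trans (by linarith) h : a - 1 ≤ x)
        rw [h0 (a - 1) (by linarith)] at this; exact this
      · rw [h0 x h]
    · rcases le_or_gt b x with h | h
      · exact le_of_eq (h1 x h)
      · have := hmono h.le
        rwa [h1 b le_rfl] at this
  have hint : Integrable (fun G : {G : ℝ → ℝ // IsCDF a b G} => G.1 x) τ := by
    refine (integrable_const (1 : ℝ)).mono' hmeas.aestronglyMeasurable ?_
    refine ae_of_all _ fun G => ?_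
    rw [Real.norm_eq_abs, abs_le]
    exact ⟨by linarith [(hbounds G).1], (hbounds G).2⟩
  have hqle : ∀ G ∈ A, q ≤ G.1 x := by
    intro G hG
    obtain ⟨_, _, hGq⟩ := hχsel G
    exact hGq.trans (G.2.1 hG)
  have step1 : (τ A).toReal * q ≤ ∫ G in A, (G : {G : ℝ → ℝ // IsCDF a b G}).1 x ∂τ := by
    have := setIntegral_mono_on (integrableOn_const (C := q) (measure_ne_top τ A))
      hint.integrableOn hAmeas hqle
    rwa [setIntegral_const, smul_eq_mul] at this
  have step2 : (∫ G in A, (G : {G : ℝ → ℝ // IsCDF a b G}).1 x ∂τ)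
      ≤ ∫ G, (G : {G : ℝ → ℝ // IsCDF a b G}).1 x ∂τ :=
    setIntegral_le_integral hint (ae_of_all _ fun G => (hbounds G).1)
  have hFx : (τ A).toReal * q ≤ F x := by
    rw [← hbary x]; exact step1.trans step2
  rw [hH x, le_div_iff₀ hq.1]
  exact hFx
end
end

section
/- Let τ be an experiment with prior F, χ a measurable selection of q-quantiles, and H the induced distribution of χ(G). Then for all x ∈ Θ, H(x) ≥ (F(x) − q)/(1 − q). -/
open MeasureTheory Set Filter

noncomputable section

/-- any implemented distribution of posterior `q`-quantiles satisfies
`H(x) ≥ (F(x) - q)/(1 - q)`. -/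
theorem implemented_ge_lower_bound (a b q : ℝ) (hab : a < b)
    (hq : q ∈ Set.Ioo (0 : ℝ) 1) (F : ℝ → ℝ) (hF : IsCDF a b F)
    (τ : Measure {G : ℝ → ℝ // IsCDF a b G}) [IsProbabilityMeasure τ]
    (hbary : ∀ x : ℝ, (∫ G, (G : {G : ℝ → ℝ // IsCDF a b G}).1 x ∂τ) = F x)
    (χ : {G : ℝ → ℝ // IsCDF a b G} → ℝ) (hχmeas : Measurable χ)
    (hχsel : ∀ G : {G : ℝ → ℝ // IsCDF a b G}, χ G ∈ QSet a b q G.1)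
    (H : ℝ → ℝ) (hH : ∀ x : ℝ, H x = (τ {G | χ G ≤ x}).toReal) :
    ∀ x ∈ Set.Icc a b, (F x - q) / (1 - q) ≤ H x := by

  intro x hx
  obtain ⟨hq0, hq1⟩ := hq
  have h1q : (0:ℝ) < 1 - q := by linarith
  set S : Set {G : ℝ → ℝ // IsCDF a b G} := {G | χ G ≤ x} with hSdef
  have hSmeas : MeasurableSet S := hχmeas measurableSet_Iic
  have hfmeas : Measurable fun G : {G : ℝ → ℝ // IsCDF a b G} => G.1 x :=
    (measurable_pi_apply x).comp measurable_subtype_coe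
  have hbound : ∀ G : {G : ℝ → ℝ // IsCDF a b G}, 0 ≤ G.1 x ∧ G.1 x ≤ 1 := by
    intro G
    obtain ⟨hmono, _, h0, h1⟩ := G.2
    refine ⟨?_, ?_⟩
    · have h := h0 (a-1) (by linarith)
      calc (0:ℝ) = G.1 (a-1) := h.symm
        _ ≤ G.1 x := hmono (by linarith [hx.1])
    · calc G.1 x ≤ G.1 b := hmono hx.2
        _ = 1 := h1 b le_rfl
  have hfint : Integrable (fun G : {G : ℝ → ℝ // IsCDF a b G} => G.1 x) τ := by
    apply Integrable.mono' (integrable_const (1:ℝ)) hfmeas.aestronglyMeasurable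
    filter_upwards with G
    rw [Real.norm_eq_abs, abs_le]
    exact ⟨by linarith [(hbound G).1], (hbound G).2⟩
  set g : {G : ℝ → ℝ // IsCDF a b G} → ℝ := fun G => S.indicator (fun _ => 1 - q) G + q
    with hgdef
  have hgint : Integrable g τ :=
    ((integrable_const (1-q)).indicator hSmeas).add (integrable_const q)
  have hle : ∀ G, G.1 x ≤ g G := by
    intro G
    by_cases hG : G ∈ S
    · simp only [hgdef, Set.indicator_of_mem hG]
      linarith [(hbound G).2]
    · simp only [hgdef, Set.indicator_of_notMem hG, zero_add]
      have hx_lt : x < χ G := lt_of_not_ge hG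
      obtain ⟨hmono, _, _, _⟩ := G.2
      have h1 := hmono.le_leftLim hx_lt
      have h2 := (hχsel G).2.1
      linarith
  have hIg : ∫ G, g G ∂τ = (1 - q) * (τ S).toReal + q := by
    rw [hgdef]
    rw [integral_add ((integrable_const (1-q)).indicator hSmeas) (integrable_const q),
      integral_indicator_const _ hSmeas, integral_const]
    simp [mul_comm]
    exact Or.inl rfl
  have hFx : F x ≤ (1 - q) * (τ S).toReal + q := by
    rw [← hbary x, ← hIg]
    exact integral_mono hfint hgint hle
  rw [hH x, div_le_iff₀ h1q]
  nlinarith [hFx]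
end
end

section
/- Every implementable distribution H of posterior q-quantiles satisfies max{0, (F(x)−q)/(1−q)} ≤ H(x) ≤ min{F(x)/q, 1} for all x ∈ Θ. -/
open MeasureTheory Set Filter

noncomputable section

/-- `H` is an implementable distribution of posterior `q`-quantiles for prior `F`. -/
def Implementable (a b q : ℝ) (F H : ℝ → ℝ) : Prop :=
  ∃ τ : Measure {G : ℝ → ℝ // IsCDF a b G}, IsProbabilityMeasure τ ∧
    (∀ x : ℝ, (∫ G, (G : {G : ℝ → ℝ // IsCDF a b G}).1 x ∂τ) = F x) ∧
    ∃ χ : {G : ℝ → ℝ // IsCDF a b G} → ℝ, Measurable χ ∧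
      (∀ G : {G : ℝ → ℝ // IsCDF a b G}, χ G ∈ QSet a b q G.1) ∧
      ∀ x : ℝ, H x = (τ {G | χ G ≤ x}).toReal

lemma cdf_nonneg {a b : ℝ} {G : ℝ → ℝ} (hG : IsCDF a b G) (x : ℝ) : 0 ≤ G x := by
  have h0 : G (a - 1) = 0 := hG.2.2.1 _ (by linarith)
  have : G (a - 1) ≤ G x ∨ G x ≥ 0 := by
    rcases le_total (a - 1) x with h | h
    · exact Or.inl (hG.1 h)
    · right; rw [hG.2.2.1 x (by linarith)]
  rcases this with h | h
  · linarith
  · exact h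

lemma cdf_le_one {a b : ℝ} (hab : a < b) {G : ℝ → ℝ} (hG : IsCDF a b G) (x : ℝ) :
    G x ≤ 1 := by
  rcases le_total x b with h | h
  · have := hG.1 h
    rw [hG.2.2.2 b le_rfl] at this
    exact this
  · rw [hG.2.2.2 x h]

/-- every implementable distribution of posterior `q`-quantiles lies between
`H̲(x) = max {0, (F(x)-q)/(1-q)}` and `H̄(x) = min {F(x)/q, 1}`. -/
theorem implementable_between_bounds (a b q : ℝ) (hab : a < b)
    (hq : q ∈ Set.Ioo (0 : ℝ) 1) (F : ℝ → ℝ) (hF : IsCDF a b F)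
    (H : ℝ → ℝ) (hHimp : Implementable a b q F H) :
    ∀ x ∈ Set.Icc a b,
      max 0 ((F x - q) / (1 - q)) ≤ H x ∧ H x ≤ min (F x / q) 1 := by
  obtain ⟨τ, hτprob, hbary, χ, hχmeas, hχq, hH⟩ := hHimp
  intro x hx
  set s : Set {G : ℝ → ℝ // IsCDF a b G} := {G | χ G ≤ x} with hs_def
  have hs : MeasurableSet s := hχmeas measurableSet_Iic
  have hfmeas : Measurable fun G : {G : ℝ → ℝ // IsCDF a b G} => G.1 x :=
    (measurable_pi_apply x).comp measurable_subtype_coe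
  have hf01 : ∀ G : {G : ℝ → ℝ // IsCDF a b G}, 0 ≤ G.1 x ∧ G.1 x ≤ 1 :=
    fun G => ⟨cdf_nonneg G.2 x, cdf_le_one hab G.2 x⟩
  have hfint : Integrable (fun G : {G : ℝ → ℝ // IsCDF a b G} => G.1 x) τ := by
    refine Integrable.mono' (integrable_const 1) hfmeas.aestronglyMeasurable ?_
    exact Filter.Eventually.of_forall fun G => by
      rw [Real.norm_eq_abs, abs_of_nonneg (hf01 G).1]; exact (hf01 G).2
  have hτs_ne : τ s ≠ ⊤ := measure_ne_top τ s
  have hτsc_ne : τ sᶜ ≠ ⊤ := measure_ne_top τ sᶜ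
  have hHx : H x = (τ s).toReal := hH x
  have hHx_nonneg : 0 ≤ H x := by rw [hHx]; exact ENNReal.toReal_nonneg
  have hHx_le_one : H x ≤ 1 := by
    rw [hHx]
    have h1 : τ s ≤ 1 := prob_le_one
    have h2 := ENNReal.toReal_mono (by simp : (1:ENNReal) ≠ ⊤) h1
    simpa using h2
  -- key pointwise facts
  have hon_s : ∀ G ∈ s, q ≤ G.1 x := by
    intro G hG
    have hq2 : q ≤ G.1 (χ G) := (hχq G).2.2
    exact hq2.trans (G.2.1 hG)
  have hon_sc : ∀ G ∈ sᶜ, G.1 x ≤ q := by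
    intro G hG
    have hlt : x < χ G := not_le.mp hG
    have h1 : G.1 x ≤ Function.leftLim G.1 (χ G) := G.2.1.le_leftLim hlt
    exact h1.trans (hχq G).2.1
  -- measure of complement
  have hcompl : (τ sᶜ).toReal = 1 - (τ s).toReal := by
    have := measure_add_measure_compl (μ := τ) hs
    rw [measure_univ] at this
    have h1 : (τ s).toReal + (τ sᶜ).toReal = 1 := by
      rw [← ENNReal.toReal_add hτs_ne hτsc_ne, this]; simp
    linarith
  -- upper bound : q * H x ≤ F x
  have hupper : q * H x ≤ F x := by
    rw [hHx, ← hbary x]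
    have h1 : ∫ G in s, q ∂τ ≤ ∫ G in s, G.1 x ∂τ := by
      refine setIntegral_mono_on (integrableOn_const hτs_ne)
        (hfint.integrableOn) hs ?_
      exact fun G hG => hon_s G hG
    rw [setIntegral_const] at h1
    have h2 : ∫ G in s, G.1 x ∂τ ≤ ∫ G, G.1 x ∂τ :=
      setIntegral_le_integral hfint (Filter.Eventually.of_forall fun G => (hf01 G).1)
    calc q * (τ s).toReal = (τ s).toReal * q := mul_comm _ _
      _ ≤ ∫ G in s, G.1 x ∂τ := h1
      _ ≤ ∫ G, G.1 x ∂τ := h2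
  -- lower bound : F x ≤ H x + q * (1 - H x)
  have hlower : F x ≤ H x + q * (1 - H x) := by
    rw [← hbary x, hHx]
    have hsplit : ∫ G, G.1 x ∂τ = (∫ G in s, G.1 x ∂τ) + ∫ G in sᶜ, G.1 x ∂τ :=
      (integral_add_compl hs hfint).symm
    have h1 : ∫ G in s, G.1 x ∂τ ≤ ∫ G in s, (1 : ℝ) ∂τ := by
      refine setIntegral_mono_on hfint.integrableOn
        (integrableOn_const hτs_ne) hs ?_
      exact fun G _ => (hf01 G).2
    have h2 : ∫ G in sᶜ, G.1 x ∂τ ≤ ∫ G in sᶜ, q ∂τ := by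
      refine setIntegral_mono_on hfint.integrableOn
        (integrableOn_const hτsc_ne) hs.compl ?_
      exact fun G hG => hon_sc G hG
    rw [setIntegral_const] at h1 h2
    simp only [smul_eq_mul, mul_one, measureReal_def] at h1 h2
    rw [hsplit, hcompl] at *
    calc (∫ G in s, G.1 x ∂τ) + ∫ G in sᶜ, G.1 x ∂τ
        ≤ (τ s).toReal + (1 - (τ s).toReal) * q := add_le_add h1 h2
      _ = (τ s).toReal + q * (1 - (τ s).toReal) := by ring
  have hq0 : (0:ℝ) < q := hq.1
  have hq1 : q < 1 := hq.2
  constructor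
  · rw [max_le_iff]
    refine ⟨hHx_nonneg, ?_⟩
    rw [div_le_iff₀ (by linarith : (0:ℝ) < 1 - q)]
    nlinarith
  · rw [le_min_iff]
    refine ⟨?_, hHx_le_one⟩
    rw [le_div_iff₀ hq0]
    nlinarith
end
end

section
/- The q-quantile matching experiment τ* is a well-defined experiment: for all θ ∈ Θ, ∫₀^q [q·1{F^{-1}(ω) ≤ θ} + (1−q)·1{F^{-1}(q + (1−q)ω/q) ≤ θ}] dω/q = F(θ). -/
open MeasureTheory Set Filter

noncomputable section

lemma ginv_le_iff (a b : ℝ) (hab : a ≤ b) (F : ℝ → ℝ) (hF : IsCDF a b F)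
    {p θ : ℝ} (hp : p ≤ 1) (hθ : θ ∈ Set.Icc a b) :
    ginv a b F p ≤ θ ↔ p ≤ F θ := by
  obtain ⟨hmono, hrc, _, hone⟩ := hF
  set S : Set ℝ := {x | x ∈ Set.Icc a b ∧ p ≤ F x} with hS
  have hbS : b ∈ S := ⟨⟨hab, le_rfl⟩, (hone b le_rfl) ▸ hp⟩
  have hne : S.Nonempty := ⟨b, hbS⟩
  have hbdd : BddBelow S := ⟨a, fun x hx => hx.1.1⟩
  constructor
  · intro h
    set m := sInf S with hm
    have hsub : S ⊆ Set.Ici m := fun x hx => csInf_le hbdd hx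
    have hcl : m ∈ closure S := csInf_mem_closure hne hbdd
    have hnb : (nhdsWithin m S).NeBot := mem_closure_iff_nhdsWithin_neBot.mp hcl
    have htend : Tendsto F (nhdsWithin m S) (nhds (F m)) :=
      (hrc m).mono_left (nhdsWithin_mono m hsub)
    have hpm : p ≤ F m :=
      ge_of_tendsto htend (eventually_nhdsWithin_of_forall fun x hx => hx.2)
    exact hpm.trans (hmono h)
  · intro h
    exact csInf_le hbdd ⟨hθ, h⟩

lemma indicator_integrable (q c : ℝ) :
    Integrable (fun ω => if ω ≤ c then (1 : ℝ) else 0)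
      (volume.restrict (Set.Icc (0 : ℝ) q)) := by
  have : (fun ω => if ω ≤ c then (1 : ℝ) else 0) = (Set.Iic c).indicator (fun _ => 1) := by
    ext ω; simp [Set.indicator, Set.mem_Iic]
  rw [this]
  exact (integrableOn_const measure_Icc_lt_top.ne).indicator measurableSet_Iic

lemma indicator_setIntegral (q c : ℝ) :
    ∫ ω in Set.Icc (0 : ℝ) q, (if ω ≤ c then (1 : ℝ) else 0) = max (min q c) 0 := by
  have hfun : (fun ω => if ω ≤ c then (1 : ℝ) else 0) = (Set.Iic c).indicator (fun _ => 1) := by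
    ext ω; simp [Set.indicator, Set.mem_Iic]
  have h2 : Set.Icc (0:ℝ) q ∩ Set.Iic c = Set.Icc 0 (min q c) := by
    rw [← Set.Ici_inter_Iic, inter_assoc, Set.Iic_inter_Iic, Set.Ici_inter_Iic]
  rw [hfun, setIntegral_indicator measurableSet_Iic, h2,
    setIntegral_const, Real.volume_real_Icc, smul_eq_mul, mul_one, sub_zero]

/-- the `q`-quantile matching experiment has barycenter `F`:
for all `θ ∈ Θ`, `(1/q) ∫_0^q [q·1{F⁻¹(ω) ≤ θ} + (1-q)·1{F⁻¹(q+(1-q)ω/q) ≤ θ}] dω = F(θ)`. -/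
theorem quantile_matching_barycenter (a b q : ℝ) (hab : a < b)
    (hq : q ∈ Set.Ioo (0 : ℝ) 1) (F : ℝ → ℝ) (hF : IsCDF a b F) :
    ∀ θ ∈ Set.Icc a b,
      (∫ ω in Set.Icc (0 : ℝ) q,
        (q * (if ginv a b F ω ≤ θ then (1 : ℝ) else 0)
          + (1 - q) * (if ginv a b F (q + (1 - q) * ω / q) ≤ θ then (1 : ℝ) else 0))) / q
      = F θ := by
  intro θ hθ
  obtain ⟨hq0, hq1⟩ := hq
  have h1q : (0:ℝ) < 1 - q := by linarith
  set t := F θ with ht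
  have ht0 : 0 ≤ t := by
    have h0 := hF.2.2.1 (a - 1) (by linarith)
    have := hF.1 (show a - 1 ≤ θ by linarith [hθ.1])
    linarith
  have ht1 : t ≤ 1 := by
    have h1 := hF.2.2.2 b le_rfl
    have := hF.1 hθ.2
    linarith
  set c₂ := q * (t - q) / (1 - q) with hc₂
  have hcongr : Set.EqOn
      (fun ω => q * (if ginv a b F ω ≤ θ then (1 : ℝ) else 0)
          + (1 - q) * (if ginv a b F (q + (1 - q) * ω / q) ≤ θ then (1 : ℝ) else 0))
      (fun ω => q * (if ω ≤ t then (1 : ℝ) else 0)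
          + (1 - q) * (if ω ≤ c₂ then (1 : ℝ) else 0))
      (Set.Icc 0 q) := by
    intro ω hω
    obtain ⟨hω0, hωq⟩ := hω
    have h1 : ginv a b F ω ≤ θ ↔ ω ≤ t :=
      ginv_le_iff a b hab.le F hF (by linarith) hθ
    have harg : q + (1 - q) * ω / q ≤ 1 := by
      have : (1 - q) * ω / q ≤ 1 - q := by
        rw [div_le_iff₀ hq0]
        nlinarith
      linarith
    have h2 : ginv a b F (q + (1 - q) * ω / q) ≤ θ ↔ q + (1 - q) * ω / q ≤ t :=
      ginv_le_iff a b hab.le F hF harg hθ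
    have h3 : (q + (1 - q) * ω / q ≤ t) ↔ ω ≤ c₂ := by
      constructor
      · intro h
        have h' : (1 - q) * ω ≤ (t - q) * q := by
          have := (div_le_iff₀ hq0).mp (show (1 - q) * ω / q ≤ t - q by linarith)
          linarith
        rw [hc₂, le_div_iff₀ h1q]
        nlinarith
      · intro h
        have h' : ω * (1 - q) ≤ q * (t - q) := (le_div_iff₀ h1q).mp h
        have : (1 - q) * ω / q ≤ t - q := by
          rw [div_le_iff₀ hq0]; nlinarith
        linarith
    simp only [h1, h2, h3]
  rw [setIntegral_congr_fun measurableSet_Icc hcongr]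
  rw [integral_add ((indicator_integrable q t).const_mul q)
    ((indicator_integrable q c₂).const_mul (1 - q)),
    integral_const_mul, integral_const_mul, indicator_setIntegral, indicator_setIntegral]
  rcases le_or_gt t q with hle | hlt
  · have hc2le : c₂ ≤ 0 := div_nonpos_of_nonpos_of_nonneg (by nlinarith) h1q.le
    rw [min_eq_right hle, max_eq_left ht0,
      min_eq_right (hc2le.trans hq0.le), max_eq_right hc2le]
    field_simp
    ring
  · have hc2pos : 0 ≤ c₂ := div_nonneg (by nlinarith) h1q.le
    have hc2le : c₂ ≤ q := by
      rw [hc₂, div_le_iff₀ h1q]; nlinarith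
    rw [min_eq_left hlt.le, max_eq_left hq0.le,
      min_eq_right hc2le, max_eq_left hc2pos]
    rw [hc₂]
    field_simp
    ring
end
end

section
/- Suppose F has a positive density on Θ, so F is continuous and strictly increasing. For H ∈ ℋ absolutely continuous with respect to F with density h, and e ∈ (0,1], for each x ∈ Θ the posterior G^x = [(1−e)h(x)(q·δ_{F^{-1}(qH(x))} + (1−q)·δ_{F^{-1}(q+(1−q)H(x))}) + e·δ_x] / [(1−e)h(x) + e] has a unique q-quantile, equal to x. -/
open MeasureTheory Set Filter

noncomputable section

/-- the perturbed matching posterior `G^x` has `x` as its unique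
`q`-quantile. -/
theorem perturbed_posterior_unique_quantile (a b q e : ℝ) (hab : a < b)
    (hq : q ∈ Set.Ioo (0 : ℝ) 1) (he : e ∈ Set.Ioc (0 : ℝ) 1)
    (F f : ℝ → ℝ) (hF : IsCDF a b F)
    (hf_pos : ∀ x ∈ Set.Icc a b, 0 < f x)
    (hf_int : IntegrableOn f (Set.Icc a b))
    (hFf : ∀ x ∈ Set.Icc a b, F x = ∫ t in Set.Icc a x, f t)
    (H h : ℝ → ℝ) (hH : IsCDF a b H)
    (hbounds : ∀ x ∈ Set.Icc a b,
      max 0 ((F x - q) / (1 - q)) ≤ H x ∧ H x ≤ min (F x / q) 1)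
    (hh_nonneg : ∀ x ∈ Set.Icc a b, 0 ≤ h x)
    (hHh : ∀ x ∈ Set.Icc a b, H x = ∫ t in Set.Icc a x, h t * f t)
    (x : ℝ) (hx : x ∈ Set.Icc a b) :
    QSet a b q (fun θ =>
        ((1 - e) * h x *
            (q * (if ginv a b F (q * H x) ≤ θ then (1 : ℝ) else 0)
              + (1 - q) * (if ginv a b F (q + (1 - q) * H x) ≤ θ then (1 : ℝ) else 0))
          + e * (if x ≤ θ then (1 : ℝ) else 0)) / ((1 - e) * h x + e))
      = {x} := by
  obtain ⟨hq0, hq1⟩ := hq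
  obtain ⟨he0, he1⟩ := he
  obtain ⟨ha, hb⟩ := hx
  have hhx : 0 ≤ h x := hh_nonneg x ⟨ha, hb⟩
  have hHxb := hbounds x ⟨ha, hb⟩
  have hHx1 : H x ≤ 1 := hHxb.2.trans (min_le_right _ _)
  have hqH : q * H x ≤ F x := by
    have h1 : H x ≤ F x / q := hHxb.2.trans (min_le_left _ _)
    rw [mul_comm]
    exact (le_div_iff₀ hq0).mp h1
  have hFxH : F x ≤ q + (1 - q) * H x := by
    have h1 : (F x - q) / (1 - q) ≤ H x := (le_max_right _ _).trans hHxb.1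
    have h2 : F x - q ≤ (1 - q) * H x := by
      rw [div_le_iff₀ (by linarith)] at h1; linarith [h1]
    linarith
  -- strict monotonicity of F on [a,b]
  have hstrict : ∀ s ∈ Set.Icc a b, ∀ t ∈ Set.Icc a b, s < t → F s < F t := by
    intro s hs t ht hst
    have hsub1 : Set.Icc a s ⊆ Set.Icc a b := Icc_subset_Icc le_rfl hs.2
    have hsub2 : Set.Ioc s t ⊆ Set.Icc a b := fun u hu =>
      ⟨hs.1.trans hu.1.le, hu.2.trans ht.2⟩
    have h1 : F t - F s = ∫ u in Set.Ioc s t, f u := by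
      rw [hFf s hs, hFf t ht]
      have hun : Set.Icc a t = Set.Icc a s ∪ Set.Ioc s t :=
        (Set.Icc_union_Ioc_eq_Icc hs.1 hst.le).symm
      rw [hun, setIntegral_union
        ((Set.Iic_disjoint_Ioi le_rfl).mono Set.Icc_subset_Iic_self Set.Ioc_subset_Ioi_self)
        measurableSet_Ioc (hf_int.mono_set hsub1) (hf_int.mono_set hsub2)]
      ring
    have h2 : 0 < ∫ u in Set.Ioc s t, f u := by
      rw [← intervalIntegral.integral_of_le hst.le]
      apply intervalIntegral.intervalIntegral_pos_of_pos_on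
      · rw [intervalIntegrable_iff_integrableOn_Ioc_of_le hst.le]
        exact hf_int.mono_set hsub2
      · intro u hu
        exact hf_pos u ⟨hs.1.trans hu.1.le, hu.2.le.trans ht.2⟩
      · exact hst
    linarith
  set y₁ := ginv a b F (q * H x) with hy₁def
  set y₂ := ginv a b F (q + (1 - q) * H x) with hy₂def
  have hy1 : y₁ ≤ x := by
    apply csInf_le ⟨a, fun θ hθ => hθ.1.1⟩
    exact ⟨⟨ha, hb⟩, hqH⟩
  have hy2 : x ≤ y₂ := by
    apply le_csInf
    · refine ⟨b, ⟨hab.le, le_rfl⟩, ?_⟩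
      rw [hF.2.2.2 b le_rfl]
      nlinarith
    · rintro θ ⟨hθab, hθF⟩
      by_contra hcon
      push_neg at hcon
      have := hstrict θ hθab x ⟨ha, hb⟩ hcon
      linarith
  set A := (1 - e) * h x with hAdef
  have hA0 : 0 ≤ A := mul_nonneg (by linarith) hhx
  have hc0 : (0:ℝ) < A + e := by linarith
  set G : ℝ → ℝ := (fun θ =>
        (A * (q * (if y₁ ≤ θ then (1 : ℝ) else 0)
              + (1 - q) * (if y₂ ≤ θ then (1 : ℝ) else 0))
          + e * (if x ≤ θ then (1 : ℝ) else 0)) / (A + e)) with hGdef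
  have ind : ∀ y : ℝ, Monotone (fun θ : ℝ => if y ≤ θ then (1:ℝ) else 0) := by
    intro y s t hst
    simp only
    split_ifs with h1 h2
    · exact le_rfl
    · exact absurd (h1.trans hst) h2
    · norm_num
    · exact le_rfl
  have hGmono : Monotone G := by
    intro s t hst
    rw [hGdef]
    simp only
    have i1 := ind y₁ hst
    have i2 := ind y₂ hst
    have i3 := ind x hst
    simp only at i1 i2 i3
    gcongr <;> linarith
  -- value at x
  have hGx : q < G x := by
    rw [hGdef]
    simp only [if_pos hy1, if_pos (le_refl x)]
    rw [lt_div_iff₀ hc0]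
    have h2 : (0:ℝ) ≤ (if y₂ ≤ x then (1:ℝ) else 0) := by positivity
    nlinarith [mul_nonneg hA0 (mul_nonneg (by linarith : (0:ℝ) ≤ 1 - q) h2)]
  -- values strictly left of x
  have hGlt : ∀ t, t < x → G t < q := by
    intro t ht
    rw [hGdef]
    simp only [if_neg (by intro hc; exact absurd (hy2.trans hc) (not_le.2 ht)),
      if_neg (not_le.2 ht)]
    rw [div_lt_iff₀ hc0]
    have h1 : (0:ℝ) ≤ (if y₁ ≤ t then (1:ℝ) else 0) := by positivity
    have h1' : (if y₁ ≤ t then (1:ℝ) else 0) ≤ 1 := by split_ifs <;> norm_num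
    nlinarith [mul_nonneg hA0 h1, mul_le_mul_of_nonneg_left h1' hA0]
  -- left limit at x
  have hleft : Function.leftLim G x ≤ q := by
    rw [hGmono.leftLim_eq_sSup]
    apply csSup_le
    · exact ⟨G (x - 1), ⟨x - 1, by simp, rfl⟩⟩
    · rintro v ⟨t, ht, rfl⟩
      exact (hGlt t ht).le
  ext θ
  simp only [QSet, Set.mem_setOf_eq, Set.mem_singleton_iff]
  constructor
  · rintro ⟨hθab, hl, hr⟩
    rcases lt_trichotomy θ x with hlt | heq | hgt
    · exact absurd hr (not_le.2 (hGlt θ hlt))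
    · exact heq
    · exact absurd hl (not_le.2 (lt_of_lt_of_le hGx (hGmono.le_leftLim hgt)))
  · rintro rfl
    exact ⟨⟨ha, hb⟩, hleft, hGx.le⟩
end
end

section
/- Let V : Θ → ℝ be continuous. Define J*(p) = min argmax{V(x) : x ∈ [H̄^{-1}(p), H̲^{-1}(p)]} for p ∈ [0,1]. Then J* is nondecreasing and left-continuous, with J*(0) = a and J*(1) ≤ b. -/
open MeasureTheory Set Filter Topology

noncomputable section

section Aux

variable {a b : ℝ} {G : ℝ → ℝ}

lemma ginv_mem_le (hab : a ≤ b) (hm : Monotone G)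
    (hrc : ∀ x : ℝ, ContinuousWithinAt G (Set.Ici x) x) {p : ℝ} (hpb : p ≤ G b) :
    ginv a b G p ∈ Set.Icc a b ∧ p ≤ G (ginv a b G p) := by
  set S : Set ℝ := {θ | θ ∈ Set.Icc a b ∧ p ≤ G θ} with hS
  have hbS : b ∈ S := ⟨⟨hab, le_rfl⟩, hpb⟩
  have hbdd : BddBelow S := ⟨a, fun θ hθ => hθ.1.1⟩
  have hax : a ≤ sInf S := le_csInf ⟨b, hbS⟩ fun θ hθ => hθ.1.1
  have hxb : sInf S ≤ b := csInf_le hbdd hbS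
  refine ⟨⟨hax, hxb⟩, ?_⟩
  by_contra h
  push_neg at h
  have hev : ∀ᶠ y in 𝓝[≥] (sInf S), G y < p :=
    Filter.Tendsto.eventually_lt_const h (hrc (sInf S))
  obtain ⟨u, hu, hsub⟩ :=
    (mem_nhdsGE_iff_exists_Ico_subset' (lt_add_one (sInf S))).1 hev
  obtain ⟨θ, hθ, hθu⟩ := (csInf_lt_iff hbdd ⟨b, hbS⟩).1 hu
  exact absurd hθ.2 (not_le.2 (hsub ⟨csInf_le hbdd hθ, hθu⟩))

lemma ginv_mono (hab : a ≤ b) {p p' : ℝ} (h : p ≤ p') (h' : p' ≤ G b) :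
    ginv a b G p ≤ ginv a b G p' :=
  csInf_le_csInf ⟨a, fun θ hθ => hθ.1.1⟩ ⟨b, ⟨hab, le_rfl⟩, h'⟩
    fun θ hθ => ⟨hθ.1, h.trans hθ.2⟩

lemma ginv_le_ginv_of_le {G' : ℝ → ℝ} (hab : a ≤ b) (hGG' : ∀ y, G y ≤ G' y) {p : ℝ}
    (hpb : p ≤ G b) : ginv a b G' p ≤ ginv a b G p :=
  csInf_le_csInf ⟨a, fun θ hθ => hθ.1.1⟩ ⟨b, ⟨hab, le_rfl⟩, hpb⟩
    fun θ hθ => ⟨hθ.1, hθ.2.trans (hGG' θ)⟩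

lemma ginv_of_nonpos (hab : a ≤ b) (hG0 : ∀ y, 0 ≤ G y) {p : ℝ} (hp : p ≤ 0) :
    ginv a b G p = a := by
  have : {θ | θ ∈ Set.Icc a b ∧ p ≤ G θ} = Set.Icc a b := by
    ext θ; exact ⟨fun h => h.1, fun h => ⟨h, hp.trans (hG0 θ)⟩⟩
  rw [ginv, this, csInf_Icc hab]

lemma ginv_leftCont (hab : a ≤ b) (hm : Monotone G)
    (hrc : ∀ x : ℝ, ContinuousWithinAt G (Set.Ici x) x) {p : ℝ} (hpb : p ≤ G b) :
    Tendsto (ginv a b G) (𝓝[<] p) (𝓝 (ginv a b G p)) := by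
  have hMf : MonotoneOn (ginv a b G) (Set.Iio p) := fun x hx y hy hxy =>
    ginv_mono hab hxy ((le_of_lt hy).trans hpb)
  have h_bdd : BddAbove (ginv a b G '' Set.Iio p) := by
    refine ⟨b, fun z hz => ?_⟩
    obtain ⟨p', hp', rfl⟩ := hz
    exact (ginv_mem_le hab hm hrc ((le_of_lt hp').trans hpb)).1.2
  have hT := hMf.tendsto_nhdsLT h_bdd
  have hne : (ginv a b G '' Set.Iio p).Nonempty :=
    ⟨ginv a b G (p - 1), ⟨p - 1, Set.mem_Iio.mpr (by linarith), rfl⟩⟩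
  set M := sSup (ginv a b G '' Set.Iio p) with hM
  have hMle : M ≤ ginv a b G p := by
    refine csSup_le hne ?_
    rintro z ⟨p', hp', rfl⟩
    exact ginv_mono hab (le_of_lt hp') hpb
  have haM : a ≤ M := by
    refine le_trans ?_ (le_csSup h_bdd ⟨p - 1, Set.mem_Iio.mpr (by linarith), rfl⟩)
    exact (ginv_mem_le hab hm hrc ((by linarith : p - 1 ≤ p).trans hpb)).1.1
  have hMb : M ≤ b := hMle.trans (ginv_mem_le hab hm hrc hpb).1.2
  have hpGM : p ≤ G M := by
    refine le_of_forall_lt fun c hc => ?_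
    have hmid1 : c < (c + p) / 2 := by linarith
    have hmid2 : (c + p) / 2 < p := by linarith
    have hmem := ginv_mem_le hab hm hrc ((le_of_lt hmid2).trans hpb)
      (p := (c + p) / 2)
    have hle : ginv a b G ((c + p) / 2) ≤ M :=
      le_csSup h_bdd ⟨(c + p) / 2, hmid2, rfl⟩
    exact lt_of_lt_of_le hmid1 (hmem.2.trans (hm hle))
  have hgM : ginv a b G p ≤ M := csInf_le ⟨a, fun θ hθ => hθ.1.1⟩ ⟨⟨haM, hMb⟩, hpGM⟩
  rw [← le_antisymm hMle hgM]
  exact hT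

lemma argmax_sInf_mem {V : ℝ → ℝ} {c d : ℝ} (hcd : c ≤ d)
    (hV : ContinuousOn V (Set.Icc c d)) :
    sInf {x | x ∈ Set.Icc c d ∧ ∀ y ∈ Set.Icc c d, V y ≤ V x} ∈
      {x | x ∈ Set.Icc c d ∧ ∀ y ∈ Set.Icc c d, V y ≤ V x} := by
  obtain ⟨x₀, hx₀K, hx₀⟩ := isCompact_Icc.exists_isMaxOn (Set.nonempty_Icc.2 hcd) hV
  have hAeq : {x | x ∈ Set.Icc c d ∧ ∀ y ∈ Set.Icc c d, V y ≤ V x} =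
      Set.Icc c d ∩ V ⁻¹' Set.Ici (V x₀) := by
    ext x
    constructor
    · rintro ⟨hx, hmax⟩; exact ⟨hx, hmax x₀ hx₀K⟩
    · rintro ⟨hx, hge⟩; exact ⟨hx, fun y hy => (hx₀ hy).trans hge⟩
  have hclosed : IsClosed (Set.Icc c d ∩ V ⁻¹' Set.Ici (V x₀)) :=
    hV.preimage_isClosed_of_isClosed isClosed_Icc isClosed_Ici
  rw [hAeq]
  exact hclosed.csInf_mem ⟨x₀, hx₀K, Set.mem_preimage.mpr (Set.mem_Ici.mpr le_rfl)⟩ ⟨c, fun x hx => hx.1.1⟩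

end Aux

/-- the minimal argmax selection `J*` is nondecreasing and
left-continuous, with `J*(0) = a` and `J*(1) ≤ b`. -/
theorem minimal_argmax_selection_monotone_leftCont (a b q : ℝ) (hab : a < b)
    (hq : q ∈ Set.Ioo (0 : ℝ) 1) (F : ℝ → ℝ) (hF : IsCDF a b F)
    (V : ℝ → ℝ) (hV : ContinuousOn V (Set.Icc a b))
    (Jstar : ℝ → ℝ)
    (hJ : ∀ p : ℝ, Jstar p = sInf {x |
      x ∈ Set.Icc (ginv a b (fun y => min (F y / q) 1) p)
        (ginv a b (fun y => max 0 ((F y - q) / (1 - q))) p) ∧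
      ∀ y ∈ Set.Icc (ginv a b (fun y => min (F y / q) 1) p)
        (ginv a b (fun y => max 0 ((F y - q) / (1 - q))) p), V y ≤ V x}) :
    MonotoneOn Jstar (Set.Icc 0 1) ∧
    (∀ p ∈ Set.Icc (0 : ℝ) 1, Tendsto Jstar (𝓝[<] p) (𝓝 (Jstar p))) ∧
    Jstar 0 = a ∧ Jstar 1 ≤ b := by
  obtain ⟨hq0, hq1⟩ := hq
  obtain ⟨hFm, hFrc, hFa, hFb⟩ := hF
  have habl : a ≤ b := hab.le
  -- basic bounds on F
  have hF0 : ∀ x, 0 ≤ F x := by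
    intro x
    rcases lt_or_ge x a with h | h
    · rw [hFa x h]
    · calc (0:ℝ) = F (a - 1) := (hFa _ (by linarith)).symm
        _ ≤ F x := hFm (by linarith)
  have hF1 : ∀ x, F x ≤ 1 := by
    intro x
    rcases le_or_gt b x with h | h
    · rw [hFb x h]
    · calc F x ≤ F b := hFm h.le
        _ = 1 := hFb b le_rfl
  set Hbar : ℝ → ℝ := fun y => min (F y / q) 1 with hHbar_def
  set Hlow : ℝ → ℝ := fun y => max 0 ((F y - q) / (1 - q)) with hHlow_def
  have h1q : (0:ℝ) < 1 - q := by linarith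
  have hHbarm : Monotone Hbar := fun x y h =>
    min_le_min (by gcongr; exact hFm h) le_rfl
  have hHlowm : Monotone Hlow := fun x y h =>
    max_le_max le_rfl (by gcongr; linarith [hFm h])
  have hHbarrc : ∀ x : ℝ, ContinuousWithinAt Hbar (Set.Ici x) x := fun x =>
    ((hFrc x).div_const q).min continuousWithinAt_const
  have hHlowrc : ∀ x : ℝ, ContinuousWithinAt Hlow (Set.Ici x) x := fun x =>
    continuousWithinAt_const.max (((hFrc x).sub continuousWithinAt_const).div_const (1 - q))
  have hHbarb : Hbar b = 1 := by
    have : F b = 1 := hFb b le_rfl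
    simp only [hHbar_def, this]
    rw [min_eq_right]
    rw [le_div_iff₀ hq0]; linarith
  have hHlowb : Hlow b = 1 := by
    have : F b = 1 := hFb b le_rfl
    simp only [hHlow_def, this]
    rw [div_self (by linarith : (1:ℝ) - q ≠ 0)]
    exact max_eq_right zero_le_one
  have hHbar0 : ∀ y, 0 ≤ Hbar y := fun y =>
    le_min (div_nonneg (hF0 y) hq0.le) zero_le_one
  have hHlow0 : ∀ y, 0 ≤ Hlow y := fun y => le_max_left _ _
  have hle : ∀ y, Hlow y ≤ Hbar y := by
    intro y
    refine le_min (max_le (div_nonneg (hF0 y) hq0.le) ?_) (max_le zero_le_one ?_)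
    · rw [div_le_div_iff₀ h1q hq0]
      nlinarith [mul_nonneg (sq_nonneg (1 - q)) (hF0 y), mul_nonneg (sq_nonneg q) (sub_nonneg.2 (hF1 y))]
    · rw [div_le_one h1q]; linarith [hF1 y]
  set l : ℝ → ℝ := fun p => ginv a b Hbar p with hl_def
  set u : ℝ → ℝ := fun p => ginv a b Hlow p with hu_def
  set A : ℝ → Set ℝ := fun p =>
    {x | x ∈ Set.Icc (l p) (u p) ∧ ∀ y ∈ Set.Icc (l p) (u p), V y ≤ V x} with hA_def
  have hJ' : ∀ p, Jstar p = sInf (A p) := hJ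
  clear hJ
  -- per-p facts
  have hlmem : ∀ p : ℝ, p ≤ 1 → l p ∈ Set.Icc a b ∧ p ≤ Hbar (l p) := fun p hp =>
    ginv_mem_le habl hHbarm hHbarrc (hHbarb ▸ hp)
  have humem : ∀ p : ℝ, p ≤ 1 → u p ∈ Set.Icc a b ∧ p ≤ Hlow (u p) := fun p hp =>
    ginv_mem_le habl hHlowm hHlowrc (hHlowb ▸ hp)
  have hlu : ∀ p : ℝ, p ≤ 1 → l p ≤ u p := fun p hp =>
    ginv_le_ginv_of_le habl hle (hHlowb ▸ hp)
  have hJmem : ∀ p : ℝ, p ≤ 1 → Jstar p ∈ A p := by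
    intro p hp
    rw [hJ' p]
    exact argmax_sInf_mem (hlu p hp)
      (hV.mono (Set.Icc_subset_Icc (hlmem p hp).1.1 (humem p hp).1.2))
  have hAbdd : ∀ p : ℝ, BddBelow (A p) := fun p => ⟨l p, fun x hx => hx.1.1⟩
  -- monotonicity in a strong form
  have hmono' : ∀ p₁ p₂ : ℝ, p₁ ≤ p₂ → p₂ ≤ 1 → Jstar p₁ ≤ Jstar p₂ := by
    intro p₁ p₂ h12 h21
    have h11 : p₁ ≤ 1 := h12.trans h21
    have hl12 : l p₁ ≤ l p₂ := ginv_mono habl h12 (hHbarb ▸ h21)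
    have hu12 : u p₁ ≤ u p₂ := ginv_mono habl h12 (hHlowb ▸ h21)
    have hm1 := hJmem p₁ h11
    have hm2 := hJmem p₂ h21
    by_contra hcon
    push_neg at hcon
    -- Jstar p₂ < Jstar p₁
    have hy1 : Jstar p₂ ∈ Set.Icc (l p₁) (u p₁) :=
      ⟨hl12.trans hm2.1.1, hcon.le.trans hm1.1.2⟩
    have hx2 : Jstar p₁ ∈ Set.Icc (l p₂) (u p₂) :=
      ⟨hm2.1.1.trans hcon.le, hm1.1.2.trans hu12⟩
    have hVle : V (Jstar p₁) ≤ V (Jstar p₂) := hm2.2 _ hx2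
    have hyA : Jstar p₂ ∈ A p₁ :=
      ⟨hy1, fun z hz => (hm1.2 z hz).trans hVle⟩
    have : Jstar p₁ ≤ Jstar p₂ := by
      rw [hJ' p₁]; exact csInf_le (hAbdd p₁) hyA
    exact absurd hcon (not_lt.2 this)
  -- value at nonpositive p
  have hJnonpos : ∀ p : ℝ, p ≤ 0 → Jstar p = a := by
    intro p hp
    have hlp : l p = a := ginv_of_nonpos habl hHbar0 hp
    have hup : u p = a := ginv_of_nonpos habl hHlow0 hp
    have : A p = {a} := by
      ext x
      simp only [hA_def, Set.mem_setOf_eq, hlp, hup, Set.Icc_self, Set.mem_singleton_iff]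
      constructor
      · rintro ⟨hx, -⟩; exact hx
      · rintro rfl; exact ⟨rfl, fun y hy => by rw [hy]⟩
    rw [hJ' p, this, csInf_singleton]
  have hJ0 : Jstar 0 = a := hJnonpos 0 le_rfl
  have hJ1 : Jstar 1 ≤ b := (hJmem 1 le_rfl).1.2.trans (humem 1 le_rfl).1.2
  refine ⟨fun p₁ h1 p₂ h2 h12 => hmono' p₁ p₂ h12 h2.2, ?_, hJ0, hJ1⟩
  -- left continuity
  intro p hp
  rcases eq_or_lt_of_le hp.1 with hp0 | hp0
  · -- p = 0 : Jstar is constantly a on Iio 0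
    rw [← hp0, hJ0]
    refine Tendsto.congr' ?_ tendsto_const_nhds
    filter_upwards [eventually_mem_nhdsWithin] with x hx
    exact (hJnonpos x (le_of_lt hx)).symm
  · -- 0 < p
    have hMf : MonotoneOn Jstar (Set.Iio p) := fun x hx y hy hxy =>
      hmono' x y hxy ((le_of_lt hy).trans hp.2)
    have h_bdd : BddAbove (Jstar '' Set.Iio p) := by
      refine ⟨b, ?_⟩
      rintro z ⟨p', hp', rfl⟩
      have hp'1 : p' ≤ 1 := (le_of_lt hp').trans hp.2
      exact (hJmem p' hp'1).1.2.trans (humem p' hp'1).1.2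
    have hT := hMf.tendsto_nhdsLT h_bdd
    set L := sSup (Jstar '' Set.Iio p) with hL
    have hne : (Jstar '' Set.Iio p).Nonempty := ⟨Jstar (p - 1), ⟨p - 1, Set.mem_Iio.mpr (by linarith), rfl⟩⟩
    have hLle : L ≤ Jstar p := by
      refine csSup_le hne ?_
      rintro z ⟨p', hp', rfl⟩
      exact hmono' p' p hp'.le hp.2
    have haL : a ≤ L := by
      refine le_trans ?_ (le_csSup h_bdd ⟨p - 1, Set.mem_Iio.mpr (by linarith), rfl⟩)
      rw [hJnonpos (p - 1) (by linarith [hp.2])]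
    have hLb : L ≤ b := hLle.trans ((hJmem p hp.2).1.2.trans (humem p hp.2).1.2)
    have hub : L ≤ u p := by
      refine csSup_le hne ?_
      rintro z ⟨p', hp', rfl⟩
      have hp'1 : p' ≤ 1 := hp'.le.trans hp.2
      exact (hJmem p' hp'1).1.2.trans (ginv_mono habl hp'.le (hHlowb ▸ hp.2))
    have hlb : l p ≤ L := by
      have hpHL : p ≤ Hbar L := by
        refine le_of_forall_lt fun c hc => ?_
        have hmid1 : c < (c + p) / 2 := by linarith
        have hmid2 : (c + p) / 2 < p := by linarith
        have hmid3 : (c + p) / 2 ≤ 1 := hmid2.le.trans hp.2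
        have h1 : l ((c + p) / 2) ≤ L :=
          le_trans (hJmem _ hmid3).1.1 (le_csSup h_bdd ⟨(c + p) / 2, hmid2, rfl⟩)
        exact lt_of_lt_of_le hmid1 ((hlmem _ hmid3).2.trans (hHbarm h1))
      exact csInf_le ⟨a, fun θ hθ => hθ.1.1⟩ ⟨⟨haL, hLb⟩, hpHL⟩
    -- L is a max point on [l p, u p]
    have hlt : Tendsto l (𝓝[<] p) (𝓝 (l p)) :=
      ginv_leftCont habl hHbarm hHbarrc (hHbarb ▸ hp.2)
    have hut : Tendsto u (𝓝[<] p) (𝓝 (u p)) :=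
      ginv_leftCont habl hHlowm hHlowrc (hHlowb ▸ hp.2)
    have hVJT : Tendsto (fun p' => V (Jstar p')) (𝓝[<] p) (𝓝 (V L)) := by
      refine (hV L ⟨haL, hLb⟩).tendsto.comp ?_
      rw [tendsto_nhdsWithin_iff]
      refine ⟨hT, ?_⟩
      filter_upwards [eventually_mem_nhdsWithin] with p' hp'
      have hp'1 : p' ≤ 1 := (le_of_lt hp').trans hp.2
      exact ⟨(hlmem p' hp'1).1.1.trans (hJmem p' hp'1).1.1,
        (hJmem p' hp'1).1.2.trans (humem p' hp'1).1.2⟩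
    have hmax : ∀ y ∈ Set.Icc (l p) (u p), V y ≤ V L := by
      intro y hy
      have hya : a ≤ y := (hlmem p hp.2).1.1.trans hy.1
      have hyb : y ≤ b := hy.2.trans (humem p hp.2).1.2
      set w : ℝ → ℝ := fun p' => max (l p') (min y (u p')) with hw
      have hwT : Tendsto w (𝓝[<] p) (𝓝 y) := by
        have : Tendsto w (𝓝[<] p) (𝓝 (max (l p) (min y (u p)))) :=
          hlt.max (tendsto_const_nhds.min hut)
        rwa [min_eq_left hy.2, max_eq_right hy.1] at this
      have hVwT : Tendsto (fun p' => V (w p')) (𝓝[<] p) (𝓝 (V y)) := by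
        refine (hV y ⟨hya, hyb⟩).tendsto.comp ?_
        rw [tendsto_nhdsWithin_iff]
        refine ⟨hwT, ?_⟩
        filter_upwards [eventually_mem_nhdsWithin] with p' hp'
        have hp'1 : p' ≤ 1 := (le_of_lt hp').trans hp.2
        constructor
        · exact (hlmem p' hp'1).1.1.trans (le_max_left _ _)
        · exact (max_le (hlmem p' hp'1).1.2
            ((min_le_right _ _).trans (humem p' hp'1).1.2))
      refine le_of_tendsto_of_tendsto hVwT hVJT ?_
      filter_upwards [eventually_mem_nhdsWithin] with p' hp'
      have hp'1 : p' ≤ 1 := (le_of_lt hp').trans hp.2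
      exact (hJmem p' hp'1).2 _
        ⟨le_max_left _ _, max_le (hlu p' hp'1) (min_le_right _ _)⟩
    have hLA : L ∈ A p := ⟨⟨hlb, hub⟩, hmax⟩
    have hJL : Jstar p ≤ L := by rw [hJ' p]; exact csInf_le (hAbdd p) hLA
    have : L = Jstar p := le_antisymm hLle hJL
    rwa [this] at hT
end
end

section
/- Suppose V : Θ → ℝ is continuous and quasi-concave with maximum at x* ∈ Θ. Then the distribution H defined by H(x) = H̲(x) for x < x* and H(x) = H̄(x) for x ≥ x* maximizes ∫ V dH over ℋ. -/
open MeasureTheory Set Filter Topology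

noncomputable section

lemma ginv_mem_Icc {a b p : ℝ} (hab : a ≤ b) {G : ℝ → ℝ} (hb : p ≤ G b) :
    ginv a b G p ∈ Set.Icc a b := by
  have hne : {θ | θ ∈ Set.Icc a b ∧ p ≤ G θ}.Nonempty := ⟨b, ⟨hab, le_rfl⟩, hb⟩
  have hbdd : BddBelow {θ | θ ∈ Set.Icc a b ∧ p ≤ G θ} := ⟨a, fun x hx => hx.1.1⟩
  exact ⟨le_csInf hne fun x hx => hx.1.1, csInf_le hbdd ⟨⟨hab, le_rfl⟩, hb⟩⟩

lemma ginv_le {a b p θ : ℝ} {G : ℝ → ℝ} (hθ : θ ∈ Set.Icc a b) (h : p ≤ G θ) :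
    ginv a b G p ≤ θ := csInf_le ⟨a, fun x hx => hx.1.1⟩ ⟨hθ, h⟩

lemma ginv_anti {a b p : ℝ} (hab : a ≤ b) {G₁ G₂ : ℝ → ℝ}
    (hle : ∀ x ∈ Set.Icc a b, G₁ x ≤ G₂ x) (hb : p ≤ G₁ b) :
    ginv a b G₂ p ≤ ginv a b G₁ p :=
  csInf_le_csInf ⟨a, fun x hx => hx.1.1⟩ ⟨b, ⟨hab, le_rfl⟩, hb⟩
    (fun x hx => ⟨hx.1, hx.2.trans (hle x hx.1)⟩)

lemma le_apply_ginv {a b p : ℝ} (hab : a ≤ b) {G : ℝ → ℝ}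
    (hrc : ∀ x : ℝ, ContinuousWithinAt G (Set.Ici x) x) (hb : p ≤ G b) :
    p ≤ G (ginv a b G p) := by
  by_contra hlt
  push_neg at hlt
  set S := {θ | θ ∈ Set.Icc a b ∧ p ≤ G θ} with hS
  have hne : S.Nonempty := ⟨b, ⟨hab, le_rfl⟩, hb⟩
  have hbdd : BddBelow S := ⟨a, fun x hx => hx.1.1⟩
  have hcl : sInf S ∈ closure S := csInf_mem_closure hne hbdd
  have hnb : (𝓝[S] (sInf S)).NeBot := mem_closure_iff_nhdsWithin_neBot.mp hcl
  have hsub : S ⊆ Set.Ici (sInf S) := fun θ hθ => csInf_le hbdd hθ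
  have h1 : ∀ᶠ x in 𝓝[Set.Ici (sInf S)] (sInf S), G x < p :=
    (hrc (sInf S)).eventually_lt_const hlt
  have h1' : ∀ᶠ x in 𝓝[S] (sInf S), G x < p := h1.filter_mono (nhdsWithin_mono _ hsub)
  have h2 : ∀ᶠ x in 𝓝[S] (sInf S), x ∈ S := self_mem_nhdsWithin
  obtain ⟨x, hx1, hx2⟩ := (h1'.and h2).exists
  exact absurd hx2.2 (not_le.mpr hx1)

/-- if `V` is continuous and quasi-concave with peak `x*`, then
`H = H̲` below `x*` and `H = H̄` from `x*` on maximizes `∫ V dH` over `ℋ`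
(quantile representation of `∫ V dH`). -/
theorem quasiconcave_optimal_distribution (a b q : ℝ) (hab : a < b)
    (hq : q ∈ Set.Ioo (0 : ℝ) 1) (F : ℝ → ℝ) (hF : IsCDF a b F)
    (V : ℝ → ℝ) (hV : ContinuousOn V (Set.Icc a b))
    (xstar : ℝ) (hxstar : xstar ∈ Set.Icc a b)
    (hVmono : MonotoneOn V (Set.Icc a xstar))
    (hVanti : AntitoneOn V (Set.Icc xstar b))
    (H : ℝ → ℝ)
    (hHdef : ∀ x : ℝ, H x =
      if x < xstar then max 0 ((F x - q) / (1 - q)) else min (F x / q) 1) :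
    ∀ H' : ℝ → ℝ, (IsCDF a b H' ∧ ∀ x ∈ Set.Icc a b,
        max 0 ((F x - q) / (1 - q)) ≤ H' x ∧ H' x ≤ min (F x / q) 1) →
      (∫ p in Set.Icc (0 : ℝ) 1, V (ginv a b H' p)) ≤
        ∫ p in Set.Icc (0 : ℝ) 1, V (ginv a b H p) := by
  rintro H' ⟨hH'cdf, hH'bounds⟩
  have hq0 : (0:ℝ) < q := hq.1
  have h1q : (0:ℝ) < 1 - q := by linarith [hq.2]
  set Hlo : ℝ → ℝ := fun x => max 0 ((F x - q) / (1 - q)) with hHlo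
  set Hhi : ℝ → ℝ := fun x => min (F x / q) 1 with hHhi
  have hFmono := hF.1
  have hF0 : ∀ x, 0 ≤ F x := by
    intro x
    rcases lt_or_ge x a with h | h
    · exact (hF.2.2.1 x h).ge
    · have h0 := hF.2.2.1 (a - 1) (by linarith)
      have := hFmono (show a - 1 ≤ x by linarith)
      linarith
  have hFb : F b = 1 := hF.2.2.2 b le_rfl
  have hF1 : ∀ x, F x ≤ 1 := by
    intro x
    rcases le_or_gt b x with h | h
    · exact (hF.2.2.2 x h).le
    · have := hFmono h.le
      linarith
  have hHloMono : Monotone Hlo := by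
    intro x y hxy
    simp only [hHlo]
    exact max_le_max le_rfl (by gcongr; exact hFmono hxy)
  have hHhiMono : Monotone Hhi := by
    intro x y hxy
    simp only [hHhi]
    exact min_le_min (by gcongr; exact hFmono hxy) le_rfl
  have hlohi : ∀ x, Hlo x ≤ Hhi x := by
    intro x
    have h0 := hF0 x
    have h1 := hF1 x
    simp only [hHlo, hHhi]
    apply max_le
    · exact le_min (by positivity) zero_le_one
    · apply le_min
      · rw [div_le_div_iff₀ h1q hq0]
        nlinarith [sq_nonneg (q - F x), mul_nonneg h0 (by linarith : (0:ℝ) ≤ 1 - F x)]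
      · rw [div_le_one h1q]; linarith
  have hHeq_lo : ∀ x, x < xstar → H x = Hlo x := by
    intro x hx
    rw [hHdef x, if_pos hx]
  have hHeq_hi : ∀ x, xstar ≤ x → H x = Hhi x := by
    intro x hx
    rw [hHdef x, if_neg (not_lt.mpr hx)]
  have hHmono : Monotone H := by
    intro x y hxy
    rcases lt_or_ge y xstar with hy | hy
    · rw [hHeq_lo x (lt_of_le_of_lt hxy hy), hHeq_lo y hy]
      exact hHloMono hxy
    · rcases lt_or_ge x xstar with hx | hx
      · rw [hHeq_lo x hx, hHeq_hi y hy]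
        exact (hlohi x).trans (hHhiMono hxy)
      · rw [hHeq_hi x hx, hHeq_hi y hy]
        exact hHhiMono hxy
  have hHlob : Hlo b = 1 := by
    simp only [hHlo, hFb]
    rw [div_self (ne_of_gt h1q)]
    exact max_eq_right zero_le_one
  have hHhib : Hhi b = 1 := by
    simp only [hHhi, hFb]
    apply min_eq_right
    rw [le_div_iff₀ hq0]
    linarith [hq.2]
  have hHb : H b = 1 := (hHeq_hi b hxstar.2).trans hHhib
  have hH'b : H' b = 1 := hH'cdf.2.2.2 b le_rfl
  have hFrc := hF.2.1
  have hHlorc : ∀ x, ContinuousWithinAt Hlo (Set.Ici x) x := fun x =>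
    continuousWithinAt_const.max
      (((hFrc x).sub continuousWithinAt_const).div continuousWithinAt_const (ne_of_gt h1q))
  have hHhirc : ∀ x, ContinuousWithinAt Hhi (Set.Ici x) x := fun x =>
    ((hFrc x).div continuousWithinAt_const (ne_of_gt hq0)).min continuousWithinAt_const
  have hHrc : ∀ x, ContinuousWithinAt H (Set.Ici x) x := by
    intro x
    rcases lt_or_ge x xstar with hx | hx
    · apply (hHlorc x).congr_of_eventuallyEq ?_ (hHeq_lo x hx)
      filter_upwards [nhdsWithin_le_nhds (Iio_mem_nhds hx)] with y hy
      exact hHeq_lo y hy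
    · exact (hHhirc x).congr (fun y hy => hHeq_hi y (hx.trans hy)) (hHeq_hi x hx)
  have hH'lo : ∀ x ∈ Set.Icc a b, Hlo x ≤ H' x := fun x hx => (hH'bounds x hx).1
  have hH'hi : ∀ x ∈ Set.Icc a b, H' x ≤ Hhi x := fun x hx => (hH'bounds x hx).2
  -- pointwise inequality
  have key : ∀ p ∈ Set.Icc (0:ℝ) 1, V (ginv a b H' p) ≤ V (ginv a b H p) := by
    intro p hp
    have hp1 : p ≤ 1 := hp.2
    have hpHb : p ≤ H b := by rw [hHb]; exact hp1
    have hpH'b : p ≤ H' b := by rw [hH'b]; exact hp1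
    have hpHlob : p ≤ Hlo b := by rw [hHlob]; exact hp1
    set y := ginv a b H' p with hy
    set z := ginv a b H p with hz
    have hyI : y ∈ Set.Icc a b := ginv_mem_Icc hab.le hpH'b
    have hzI : z ∈ Set.Icc a b := ginv_mem_Icc hab.le hpHb
    have hyatt : p ≤ H' y := le_apply_ginv hab.le hH'cdf.2.1 hpH'b
    have hzatt : p ≤ H z := le_apply_ginv hab.le hHrc hpHb
    rcases lt_trichotomy z xstar with hzx | hzx | hzx
    · -- z < xstar : z = ginv Hlo p, and y ≤ ginv Hlo p
      have h1 : ginv a b Hlo p ≤ z := ginv_le hzI (by rw [← hHeq_lo z hzx]; exact hzatt)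
      have h2 : y ≤ ginv a b Hlo p := ginv_anti hab.le hH'lo hpHlob
      have hyz : y ≤ z := h2.trans h1
      exact hVmono ⟨hyI.1, hyz.trans hzx.le⟩ ⟨hzI.1, hzx.le⟩ hyz
    · -- z = xstar : V y ≤ V xstar
      rw [hzx]
      rcases le_or_gt y xstar with h | h
      · exact hVmono ⟨hyI.1, h⟩ ⟨hxstar.1, le_rfl⟩ h
      · exact hVanti ⟨le_rfl, hxstar.2⟩ ⟨h.le, hyI.2⟩ h.le
    · -- z > xstar
      have hHx : H xstar < p := by
        by_contra hcon
        push_neg at hcon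
        exact absurd (ginv_le hxstar hcon) (not_le.mpr hzx)
      have hyx : xstar ≤ y := by
        by_contra hcon
        push_neg at hcon
        have h3 : H' y ≤ Hhi y := hH'hi y hyI
        have h4 : Hhi y ≤ Hhi xstar := hHhiMono hcon.le
        rw [← hHeq_hi xstar le_rfl] at h4
        linarith
      have hzy : z ≤ y := by
        apply ginv_le hyI
        rw [hHeq_hi y hyx]
        exact hyatt.trans (hH'hi y hyI)
      exact hVanti ⟨hzx.le, hzI.2⟩ ⟨hyx, hyI.2⟩ hzy
  -- integration setup
  obtain ⟨C, hC⟩ : ∃ C, ∀ x ∈ Set.Icc a b, ‖V x‖ ≤ C :=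
    isCompact_Icc.exists_bound_of_continuousOn hV
  set proj : ℝ → ℝ := fun t => max a (min b t) with hproj
  have hprojmem : ∀ t, proj t ∈ Set.Icc a b := fun t =>
    ⟨le_max_left _ _, max_le hab.le (min_le_left _ _)⟩
  have hprojeq : ∀ t ∈ Set.Icc a b, proj t = t := by
    intro t ht
    simp only [hproj]
    rw [min_eq_right ht.2, max_eq_right ht.1]
  have hprojcont : Continuous proj := continuous_const.max (continuous_const.min continuous_id)
  have hW : Continuous (fun t => V (proj t)) := hV.comp_continuous hprojcont hprojmem
  have hmono' : ∀ G : ℝ → ℝ, G b = 1 → Monotone (fun p => ginv a b G (min p 1)) := by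
    intro G hGb p₁ p₂ h12
    have hbdd : BddBelow {θ | θ ∈ Set.Icc a b ∧ min p₁ 1 ≤ G θ} := ⟨a, fun x hx => hx.1.1⟩
    have hne : {θ | θ ∈ Set.Icc a b ∧ min p₂ 1 ≤ G θ}.Nonempty :=
      ⟨b, ⟨hab.le, le_rfl⟩, by rw [hGb]; exact min_le_right _ _⟩
    exact csInf_le_csInf hbdd hne fun x hx => ⟨hx.1, le_trans (min_le_min h12 le_rfl) hx.2⟩
  have hint : ∀ G : ℝ → ℝ, Monotone (fun p => ginv a b G (min p 1)) →
      IntegrableOn (fun p => V (proj (ginv a b G (min p 1)))) (Set.Icc (0:ℝ) 1) := by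
    intro G hm
    have hmeas : Measurable (fun p => V (proj (ginv a b G (min p 1)))) :=
      hW.measurable.comp hm.measurable
    refine Integrable.mono' (g := fun _ => C)
      ((integrableOn_const_iff (C := C)).mpr (Or.inr ?_)) hmeas.aestronglyMeasurable ?_
    · rw [Real.volume_Icc]; exact ENNReal.ofReal_lt_top
    · filter_upwards with p
      exact hC _ (hprojmem _)
  have hcong : ∀ G : ℝ → ℝ, G b = 1 → ∀ p ∈ Set.Icc (0:ℝ) 1,
      V (ginv a b G p) = V (proj (ginv a b G (min p 1))) := by
    intro G hGb p hp
    rw [min_eq_left hp.2, hprojeq _ (ginv_mem_Icc hab.le (by rw [hGb]; exact hp.2))]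
  calc (∫ p in Set.Icc (0:ℝ) 1, V (ginv a b H' p))
      = ∫ p in Set.Icc (0:ℝ) 1, V (proj (ginv a b H' (min p 1))) :=
        setIntegral_congr_fun measurableSet_Icc (fun p hp => hcong H' hH'b p hp)
    _ ≤ ∫ p in Set.Icc (0:ℝ) 1, V (proj (ginv a b H (min p 1))) := by
        apply setIntegral_mono_on (hint H' (hmono' H' hH'b)) (hint H (hmono' H hHb))
          measurableSet_Icc
        intro p hp
        rw [← hcong H' hH'b p hp, ← hcong H hHb p hp]
        exact key p hp
    _ = ∫ p in Set.Icc (0:ℝ) 1, V (ginv a b H p) :=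
        (setIntegral_congr_fun measurableSet_Icc (fun p hp => hcong H hHb p hp)).symm
end
end

section
/- Suppose F has a positive density on Θ, and let τ be an experiment that, for each p ∈ [0,1], implements the distribution H_p (equal to H̄ below F^{-1}(qp), constant at p on [F^{-1}(qp), F^{-1}(q+(1−q)p)), and equal to H̲ above). Then for each p ∈ [0,1], τ({G : G(F^{-1}(qp)) = q and G(F^{-1}(q+(1−q)p)) = 1}) = p and τ({G : G(F^{-1}(qp)) = 0 and G(F^{-1}(q+(1−q)p)) = q}) = 1 − p. -/
open MeasureTheory Set Filter Topology

noncomputable section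

/-- `τ` implements `H`: some measurable selection of `q`-quantiles has pushforward
distribution `H` under `τ`. -/
def ImplementedBy (a b q : ℝ) (τ : Measure {G : ℝ → ℝ // IsCDF a b G})
    (H : ℝ → ℝ) : Prop :=
  ∃ χ : {G : ℝ → ℝ // IsCDF a b G} → ℝ, Measurable χ ∧
    (∀ G : {G : ℝ → ℝ // IsCDF a b G}, χ G ∈ QSet a b q G.1) ∧
    ∀ x : ℝ, H x = (τ {G | χ G ≤ x}).toReal

/-- The step distribution `H_p`: equal to `H̄` below `x̲_p = F⁻¹(qp)`, constant at `p`
on `[x̲_p, x̄_p)` with `x̄_p = F⁻¹(q+(1-q)p)`, and equal to `H̲` from `x̄_p` on. -/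
def Hstep (a b q : ℝ) (F : ℝ → ℝ) (p : ℝ) : ℝ → ℝ := fun x =>
  if x < ginv a b F (q * p) then min (F x / q) 1
  else if x < ginv a b F (q + (1 - q) * p) then p
  else max 0 ((F x - q) / (1 - q))

/-- A CDF takes values in `[0,1]`. -/
lemma IsCDF.mem_Icc01 {a b : ℝ} {G : ℝ → ℝ} (h : IsCDF a b G) (x : ℝ) :
    G x ∈ Set.Icc (0 : ℝ) 1 := by
  constructor
  · have h0 : G (min x (a - 1)) = 0 :=
      h.2.2.1 _ (lt_of_le_of_lt (min_le_right _ _) (by linarith))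
    calc (0 : ℝ) = G (min x (a - 1)) := h0.symm
      _ ≤ G x := h.1 (min_le_left _ _)
  · have h1 : G (max x b) = 1 := h.2.2.2 _ (le_max_right _ _)
    calc G x ≤ G (max x b) := h.1 (le_max_left _ _)
      _ = 1 := h1

/-- If `F` is continuous and strictly monotone on `[a,b]` with `F a = 0`, `F b = 1`,
then `ginv` evaluates `F` back to the level. -/
lemma ginv_eval {a b : ℝ} (hab : a ≤ b) {F : ℝ → ℝ}
    (hcont : ContinuousOn F (Set.Icc a b)) (hstrict : StrictMonoOn F (Set.Icc a b))
    (hFa : F a = 0) (hFb : F b = 1) {s : ℝ} (hs0 : 0 ≤ s) (hs1 : s ≤ 1) :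
    ginv a b F s ∈ Set.Icc a b ∧ F (ginv a b F s) = s := by
  have hmem : s ∈ Set.Icc (F a) (F b) := by rw [hFa, hFb]; exact ⟨hs0, hs1⟩
  obtain ⟨θ0, hθ0, hFθ0⟩ := intermediate_value_Icc hab hcont hmem
  have hleast : IsLeast {θ | θ ∈ Set.Icc a b ∧ s ≤ F θ} θ0 := by
    refine ⟨⟨hθ0, hFθ0.ge⟩, fun θ hθ => ?_⟩
    by_contra hlt
    push_neg at hlt
    have := hstrict hθ.1 hθ0 hlt
    rw [hFθ0] at this
    exact absurd hθ.2 (not_le.2 this)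
  rw [ginv, hleast.csInf_eq]
  exact ⟨hθ0, hFθ0⟩

/-- if `τ` implements every `H_p`, then for each `p`,
`τ(G(x̲_p) = q, G(x̄_p) = 1) = p` and `τ(G(x̲_p) = 0, G(x̄_p) = q) = 1 - p`. -/
theorem implementing_all_Hp_pins_down_masses (a b q : ℝ) (hab : a < b)
    (hq : q ∈ Set.Ioo (0 : ℝ) 1) (F f : ℝ → ℝ) (hF : IsCDF a b F)
    (hf_pos : ∀ x ∈ Set.Icc a b, 0 < f x)
    (hf_int : IntegrableOn f (Set.Icc a b))
    (hFf : ∀ x ∈ Set.Icc a b, F x = ∫ t in Set.Icc a x, f t)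
    (τ : Measure {G : ℝ → ℝ // IsCDF a b G}) [IsProbabilityMeasure τ]
    (hbary : ∀ x : ℝ, (∫ G, (G : {G : ℝ → ℝ // IsCDF a b G}).1 x ∂τ) = F x)
    (himp : ∀ p ∈ Set.Icc (0 : ℝ) 1, ImplementedBy a b q τ (Hstep a b q F p)) :
    ∀ p ∈ Set.Icc (0 : ℝ) 1,
      τ {G | G.1 (ginv a b F (q * p)) = q ∧ G.1 (ginv a b F (q + (1 - q) * p)) = 1}
          = ENNReal.ofReal p ∧
      τ {G | G.1 (ginv a b F (q * p)) = 0 ∧ G.1 (ginv a b F (q + (1 - q) * p)) = q}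
          = ENNReal.ofReal (1 - p) := by
  -- Basic facts about F
  have hFa : F a = 0 := by
    rw [hFf a ⟨le_rfl, hab.le⟩, Set.Icc_self]
    have h0 : (volume : Measure ℝ).restrict {a} = 0 := by
      rw [Measure.restrict_eq_zero]; exact measure_singleton a
    rw [h0, integral_zero_measure]
  have hFb : F b = 1 := hF.2.2.2 b le_rfl
  have hcont : ContinuousOn F (Set.Icc a b) := by
    refine ContinuousOn.congr (intervalIntegral.continuousOn_primitive (μ := volume) hf_int)
      (fun x hx => ?_)
    rw [hFf x hx, integral_Icc_eq_integral_Ioc]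
  have hstrict : StrictMonoOn F (Set.Icc a b) := by
    intro x hx y hy hxy
    have hsub : Set.Ioc x y ⊆ Set.Icc a b := fun t ht =>
      ⟨hx.1.trans ht.1.le, ht.2.trans hy.2⟩
    have hunion : Set.Icc a x ∪ Set.Ioc x y = Set.Icc a y :=
      Set.Icc_union_Ioc_eq_Icc hx.1 hxy.le
    have hdisj : Disjoint (Set.Icc a x) (Set.Ioc x y) := by
      rw [Set.disjoint_left]
      rintro t ⟨_, ht2⟩ ⟨ht3, _⟩
      exact absurd ht2 (not_le.2 ht3)
    have hint1 : IntegrableOn f (Set.Icc a x) :=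
      hf_int.mono_set (Set.Icc_subset_Icc le_rfl hx.2)
    have hint2 : IntegrableOn f (Set.Ioc x y) := hf_int.mono_set hsub
    have hsplit : F y = F x + ∫ t in Set.Ioc x y, f t := by
      rw [hFf y hy, hFf x hx, ← hunion, setIntegral_union hdisj measurableSet_Ioc hint1 hint2]
    have hpos : 0 < ∫ t in Set.Ioc x y, f t := by
      have hii : IntervalIntegrable f volume x y := by
        rw [intervalIntegrable_iff_integrableOn_Ioc_of_le hxy.le]
        exact hint2
      have := intervalIntegral.intervalIntegral_pos_of_pos_on hii
        (fun t ht => hf_pos t ⟨hx.1.trans ht.1.le, ht.2.le.trans hy.2⟩) hxy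
      rwa [intervalIntegral.integral_of_le hxy.le] at this
    linarith
  intro p hp
  have hq0 : (0 : ℝ) < q := hq.1
  have hq1 : q < 1 := hq.2
  have hp0 : (0 : ℝ) ≤ p := hp.1
  have hp1 : p ≤ 1 := hp.2
  -- the two levels
  have hs1_mem : (0 : ℝ) ≤ q * p ∧ q * p ≤ 1 :=
    ⟨mul_nonneg hq0.le hp0, by nlinarith⟩
  have hs2_mem : (0 : ℝ) ≤ q + (1 - q) * p ∧ q + (1 - q) * p ≤ 1 :=
    ⟨by nlinarith, by nlinarith⟩
  have hs12 : q * p < q + (1 - q) * p := by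
    rcases eq_or_lt_of_le hp0 with hp' | hp'
    · rw [← hp']; simpa using hq0
    · nlinarith [mul_pos hp' (sub_pos.2 hq1), mul_nonneg hq0.le (sub_nonneg.2 hp1)]
  set x1 := ginv a b F (q * p) with hx1def
  set x2 := ginv a b F (q + (1 - q) * p) with hx2def
  obtain ⟨hx1m, hFx1⟩ := ginv_eval hab.le hcont hstrict hFa hFb hs1_mem.1 hs1_mem.2
  obtain ⟨hx2m, hFx2⟩ := ginv_eval hab.le hcont hstrict hFa hFb hs2_mem.1 hs2_mem.2
  rw [← hx1def] at hx1m hFx1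
  rw [← hx2def] at hx2m hFx2
  have hx12 : x1 < x2 := by
    by_contra hcon
    push_neg at hcon
    have := hF.1 hcon
    rw [hFx1, hFx2] at this
    linarith
  obtain ⟨χ, hχm, hχq, hχH⟩ := himp p hp
  -- measures of the χ-events
  have hH1 : Hstep a b q F p x1 = p := by
    rw [Hstep, ← hx1def, ← hx2def, if_neg (lt_irrefl x1), if_pos hx12]
  have hH2 : Hstep a b q F p x2 = p := by
    rw [Hstep, ← hx1def, ← hx2def, if_neg (not_lt.2 hx12.le), if_neg (lt_irrefl x2), hFx2]
    rw [add_sub_cancel_left, mul_comm, mul_div_assoc,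
      div_self (by linarith : (1 : ℝ) - q ≠ 0), mul_one, max_eq_right hp0]
  have hτ1 : τ {G | χ G ≤ x1} = ENNReal.ofReal p := by
    have h' := (hχH x1).symm
    rw [hH1] at h'
    calc τ {G | χ G ≤ x1} = ENNReal.ofReal (τ {G | χ G ≤ x1}).toReal :=
          (ENNReal.ofReal_toReal (measure_ne_top τ _)).symm
      _ = ENNReal.ofReal p := by rw [h']
  have hτ2 : τ {G | χ G ≤ x2} = ENNReal.ofReal p := by
    have h' := (hχH x2).symm
    rw [hH2] at h'
    calc τ {G | χ G ≤ x2} = ENNReal.ofReal (τ {G | χ G ≤ x2}).toReal :=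
          (ENNReal.ofReal_toReal (measure_ne_top τ _)).symm
      _ = ENNReal.ofReal p := by rw [h']
  set A : Set {G : ℝ → ℝ // IsCDF a b G} := {G | χ G ≤ x1} with hAdef
  have hA : MeasurableSet A := hχm measurableSet_Iic
  have hτA : (τ A).toReal = p := by rw [hτ1, ENNReal.toReal_ofReal hp0]
  -- a.e. either χ G ≤ x1 or x2 < χ G
  have hnull : τ ({G | χ G ≤ x2} \ A) = 0 := by
    have hmd := measure_diff (μ := τ) (s₁ := {G | χ G ≤ x2}) (s₂ := A)
      (fun G hG => le_trans hG hx12.le) hA.nullMeasurableSet (measure_ne_top τ _)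
    rw [hmd, hτ2, hτ1, tsub_self]
  have h_ae_or : ∀ᵐ G ∂τ, χ G ≤ x1 ∨ x2 < χ G := by
    have h := measure_eq_zero_iff_ae_notMem.1 hnull
    filter_upwards [h] with G hG
    rcases le_or_gt (χ G) x1 with h1 | h1
    · exact Or.inl h1
    · rcases le_or_gt (χ G) x2 with h2 | h2
      · exact absurd ⟨h2, not_le.2 h1⟩ hG
      · exact Or.inr h2
  -- measurability and integrability of evaluations
  have hmeas_ev : ∀ x : ℝ, Measurable (fun G : {G : ℝ → ℝ // IsCDF a b G} => G.1 x) :=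
    fun x => (measurable_pi_apply x).comp measurable_subtype_coe
  have hint_ev : ∀ x : ℝ, Integrable (fun G : {G : ℝ → ℝ // IsCDF a b G} => G.1 x) τ := by
    intro x
    refine Integrable.mono' (integrable_const 1) (hmeas_ev x).aestronglyMeasurable
      (Filter.Eventually.of_forall fun G => ?_)
    have := G.2.mem_Icc01 x
    rw [Real.norm_eq_abs, abs_le]
    exact ⟨by linarith [this.1], this.2⟩
  -- first function: G.1 x1 equals q·1_A a.e.
  have hint_ind : ∀ c : ℝ, Integrable (A.indicator (fun _ => c)) τ :=
    fun c => (integrable_const c).indicator hA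
  have hIind : ∀ c : ℝ, ∫ G, A.indicator (fun _ => c) G ∂τ = p * c := by
    intro c
    rw [integral_indicator_const c hA, measureReal_def, hτA, smul_eq_mul]
  have hae1 : ∀ᵐ G ∂τ, G.1 x1 = A.indicator (fun _ => q) G := by
    have hle : ∀ G : {G : ℝ → ℝ // IsCDF a b G},
        A.indicator (fun _ => q) G ≤ G.1 x1 := by
      intro G
      by_cases hGA : G ∈ A
      · rw [Set.indicator_of_mem hGA]
        exact ((hχq G).2.2).trans (G.2.1 hGA)
      · rw [Set.indicator_of_notMem hGA]
        exact (G.2.mem_Icc01 x1).1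
    have hzero : ∫ G, (G.1 x1 - A.indicator (fun _ => q) G) ∂τ = 0 := by
      rw [integral_sub (hint_ev x1) (hint_ind q), hbary x1, hFx1, hIind q]
      ring
    have h0 := (integral_eq_zero_iff_of_nonneg_ae
      (Filter.Eventually.of_forall fun G => sub_nonneg.2 (hle G))
      ((hint_ev x1).sub (hint_ind q))).1 hzero
    filter_upwards [h0] with G hG
    have : G.1 x1 - A.indicator (fun _ => q) G = 0 := hG
    linarith
  -- second function: G.1 x2 equals (1-q)·1_A + q a.e.
  have hae2 : ∀ᵐ G ∂τ, G.1 x2 = A.indicator (fun _ => 1 - q) G + q := by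
    have hle : ∀ᵐ G ∂τ, G.1 x2 ≤ A.indicator (fun _ => 1 - q) G + q := by
      filter_upwards [h_ae_or] with G hG
      rcases hG with h1 | h1
      · have h1' : G ∈ A := h1
        rw [Set.indicator_of_mem h1']
        have := (G.2.mem_Icc01 x2).2
        linarith
      · have hGA : G ∉ A := by
          intro hGA
          exact absurd (lt_of_lt_of_le (hx12.trans h1) hGA) (lt_irrefl x1)
        rw [Set.indicator_of_notMem hGA, zero_add]
        exact (G.2.1.le_leftLim h1).trans (hχq G).2.1
    have hIh2 : ∫ G, (A.indicator (fun _ => 1 - q) G + q) ∂τ = q + (1 - q) * p := by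
      rw [integral_add (hint_ind (1 - q)) (integrable_const q), hIind (1 - q),
        integral_const, measureReal_def, measure_univ, ENNReal.toReal_one, one_smul]
      ring
    have hint_h2 : Integrable
        (fun G : {G : ℝ → ℝ // IsCDF a b G} => A.indicator (fun _ => (1 : ℝ) - q) G + q) τ :=
      (hint_ind (1 - q)).add (integrable_const q)
    have hzero : ∫ G, ((A.indicator (fun _ => 1 - q) G + q) - G.1 x2) ∂τ = 0 := by
      rw [integral_sub hint_h2 (hint_ev x2), hbary x2, hFx2, hIh2]
      ring
    have h0 := (integral_eq_zero_iff_of_nonneg_ae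
      (by filter_upwards [hle] with G hG; exact sub_nonneg.2 hG)
      (hint_h2.sub (hint_ev x2))).1 hzero
    filter_upwards [h0] with G hG
    have : (A.indicator (fun _ => 1 - q) G + q) - G.1 x2 = 0 := hG
    linarith
  -- combine
  have hmain : ∀ᵐ G ∂τ, (G ∈ A → G.1 x1 = q ∧ G.1 x2 = 1) ∧
      (G ∉ A → G.1 x1 = 0 ∧ G.1 x2 = q) := by
    filter_upwards [hae1, hae2] with G h1e h2e
    constructor
    · intro hGA
      rw [h1e, h2e, Set.indicator_of_mem hGA, Set.indicator_of_mem hGA]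
      exact ⟨rfl, by ring⟩
    · intro hGA
      rw [h1e, h2e, Set.indicator_of_notMem hGA, Set.indicator_of_notMem hGA]
      exact ⟨rfl, by ring⟩
  constructor
  · have heq : {G : {G : ℝ → ℝ // IsCDF a b G} | G.1 x1 = q ∧ G.1 x2 = 1} =ᵐ[τ] A := by
      rw [Filter.eventuallyEq_set]
      filter_upwards [hmain] with G hG
      constructor
      · intro hS
        by_contra hGA
        have h0 := (hG.2 hGA).1
        rw [hS.1] at h0
        exact absurd h0.symm (ne_of_lt hq0)
      · exact fun hGA => hG.1 hGA
    rw [measure_congr heq, hτ1]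
  · have heq : {G : {G : ℝ → ℝ // IsCDF a b G} | G.1 x1 = 0 ∧ G.1 x2 = q} =ᵐ[τ] (Aᶜ : Set {G : ℝ → ℝ // IsCDF a b G}) := by
      rw [Filter.eventuallyEq_set]
      filter_upwards [hmain] with G hG
      constructor
      · intro hS hGA
        have h0 := (hG.1 hGA).1
        rw [hS.1] at h0
        exact absurd h0 (ne_of_lt hq0)
      · exact fun hGA => hG.2 hGA
    rw [measure_congr heq, measure_compl hA (measure_ne_top τ A), hτ1, measure_univ,
      ENNReal.ofReal_sub 1 hp0, ENNReal.ofReal_one]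
end
end

section
/- Suppose F has a positive density on Θ. The q-quantile matching experiment τ* is the unique experiment that implements H_p for every p ∈ [0,1]: any experiment τ implementing all H_p satisfies τ = τ*. -/
open MeasureTheory Set Filter Topology

noncomputable section

namespace QMU

variable {a b q r x y : ℝ} {F f : ℝ → ℝ}

lemma cdf_nonneg (hF : IsCDF a b F) (x : ℝ) : 0 ≤ F x := by
  rcases lt_or_ge x a with h | h
  · exact (hF.2.2.1 x h).ge
  · have h0 := hF.2.2.1 (a - 1) (by linarith)
    calc (0:ℝ) = F (a - 1) := h0.symm
    _ ≤ F x := hF.1 (by linarith)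

lemma cdf_le_one (hF : IsCDF a b F) (x : ℝ) : F x ≤ 1 := by
  have h1 := hF.2.2.2 (max x b) (le_max_right _ _)
  calc F x ≤ F (max x b) := hF.1 (le_max_left _ _)
  _ = 1 := h1

lemma cdf_Fa (hF : IsCDF a b F)
    (hFf : ∀ x ∈ Set.Icc a b, F x = ∫ t in Set.Icc a x, f t) (hab : a ≤ b) :
    F a = 0 := by
  have := hFf a ⟨le_rfl, hab⟩
  rw [this, Set.Icc_self]
  simp [MeasureTheory.Measure.restrict_singleton]

lemma cdf_le_a (hF : IsCDF a b F) (hFa : F a = 0) (h : x ≤ a) : F x = 0 :=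
  le_antisymm (hFa ▸ hF.1 h) (cdf_nonneg hF x)

lemma F_strict (hF : IsCDF a b F) (hf_pos : ∀ x ∈ Set.Icc a b, 0 < f x)
    (hf_int : IntegrableOn f (Set.Icc a b))
    (hFf : ∀ x ∈ Set.Icc a b, F x = ∫ t in Set.Icc a x, f t)
    (hax : a ≤ x) (hxy : x < y) (hyb : y ≤ b) : F x < F y := by
  have hxb : x ≤ b := le_trans hxy.le hyb
  have hay : a ≤ y := le_trans hax hxy.le
  rw [hFf x ⟨hax, hxb⟩, hFf y ⟨hay, hyb⟩]
  have hsplit : Set.Icc a y = Set.Icc a x ∪ Set.Ioc x y :=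
    (Set.Icc_union_Ioc_eq_Icc hax hxy.le).symm
  have hdisj : Disjoint (Set.Icc a x) (Set.Ioc x y) :=
    (Set.Iic_disjoint_Ioc le_rfl).mono Set.Icc_subset_Iic_self le_rfl
  have hsub1 : Set.Icc a x ⊆ Set.Icc a b := Set.Icc_subset_Icc le_rfl hxb
  have hsub2 : Set.Ioc x y ⊆ Set.Icc a b := fun t ht =>
    ⟨le_trans hax ht.1.le, le_trans ht.2 hyb⟩
  rw [hsplit, MeasureTheory.setIntegral_union hdisj measurableSet_Ioc
    (hf_int.mono_set hsub1) (hf_int.mono_set hsub2)]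
  have hpos : 0 < ∫ t in Set.Ioc x y, f t := by
    rw [MeasureTheory.setIntegral_pos_iff_support_of_nonneg_ae]
    · have hsupp : Set.Ioc x y ⊆ Function.support f := fun t ht =>
        (hf_pos t (hsub2 ht)).ne'
      rw [Set.inter_eq_self_of_subset_right hsupp]
      simp [Real.volume_Ioc, hxy]
    · rw [EventuallyLE, ae_restrict_iff' measurableSet_Ioc]
      exact ae_of_all _ fun t ht => (hf_pos t (hsub2 ht)).le
    · exact hf_int.mono_set hsub2
  linarith

lemma F_contOn (hf_int : IntegrableOn f (Set.Icc a b))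
    (hFf : ∀ x ∈ Set.Icc a b, F x = ∫ t in Set.Icc a x, f t) :
    ContinuousOn F (Set.Icc a b) := by
  have h := intervalIntegral.continuousOn_primitive (f := f) (a := a) (b := b) (μ := volume) hf_int
  apply h.congr
  intro x hx
  rw [hFf x hx, MeasureTheory.integral_Icc_eq_integral_Ioc]

section ginv

lemma gS_nonempty (hF : IsCDF a b F) (hab : a ≤ b) (hr : r ≤ 1) :
    {θ | θ ∈ Set.Icc a b ∧ r ≤ F θ}.Nonempty :=
  ⟨b, ⟨hab, le_rfl⟩, by rw [hF.2.2.2 b le_rfl]; exact hr⟩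

lemma gS_bdd : BddBelow {θ | θ ∈ Set.Icc a b ∧ r ≤ F θ} :=
  ⟨a, fun θ hθ => hθ.1.1⟩

lemma ginv_mem (hF : IsCDF a b F) (hab : a ≤ b) (hr : r ≤ 1) :
    ginv a b F r ∈ Set.Icc a b :=
  ⟨le_csInf (gS_nonempty hF hab hr) fun θ hθ => hθ.1.1,
   csInf_le gS_bdd ⟨⟨hab, le_rfl⟩, by rw [hF.2.2.2 b le_rfl]; exact hr⟩⟩

lemma F_ginv_ge (hF : IsCDF a b F) (hab : a ≤ b) (hr : r ≤ 1) :
    r ≤ F (ginv a b F r) := by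
  rcases eq_or_lt_of_le (ginv_mem hF hab hr).2 with hmb | hmb
  · rw [hmb, hF.2.2.2 b le_rfl]; exact hr
  set m := ginv a b F r with hm
  have key : ∀ z, m < z → r ≤ F z := by
      intro z hz
      obtain ⟨θ, hθS, hθz⟩ := exists_lt_of_csInf_lt (gS_nonempty hF hab hr) hz
      exact hθS.2.trans (hF.1 hθz.le)
  have htend : Tendsto F (𝓝[>] m) (𝓝 (F m)) :=
    (hF.2.1 m).tendsto.mono_left (nhdsWithin_mono m Set.Ioi_subset_Ici_self)
  exact ge_of_tendsto htend (eventually_nhdsWithin_of_forall fun z hz => key z hz)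

lemma ginv_le (hF : IsCDF a b F) (hFa : F a = 0) (hab : a ≤ b)
    (h : r ≤ F x) (hr : 0 < r) : ginv a b F r ≤ x := by
  have hax : a < x := by
    by_contra hc
    push_neg at hc
    have : F x ≤ 0 := (cdf_le_a hF hFa hc).le
    linarith
  rcases le_or_gt x b with hxb | hxb
  · exact csInf_le gS_bdd ⟨⟨hax.le, hxb⟩, h⟩
  · exact le_trans (ginv_mem hF hab (le_trans h (cdf_le_one hF x))).2 hxb.le

lemma lt_ginv (hF : IsCDF a b F) (hab : a ≤ b) (h : F x < r) (hr : r ≤ 1) :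
    x < ginv a b F r := by
  by_contra hc
  push_neg at hc
  have : r ≤ F x := (F_ginv_ge hF hab hr).trans (hF.1 hc)
  linarith

lemma ginv_nonpos (hF : IsCDF a b F) (hab : a ≤ b) (hr : r ≤ 0) :
    ginv a b F r = a := by
  have : {θ | θ ∈ Set.Icc a b ∧ r ≤ F θ} = Set.Icc a b := by
    ext θ
    simp only [Set.mem_setOf_eq, and_iff_left_iff_imp]
    exact fun _ => le_trans hr (cdf_nonneg hF θ)
  rw [ginv, this, csInf_Icc hab]

lemma ginv_mono (hF : IsCDF a b F) (hab : a ≤ b) (h : r ≤ x) (hx : x ≤ 1) :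
    ginv a b F r ≤ ginv a b F x :=
  csInf_le_csInf gS_bdd (gS_nonempty hF hab hx)
    (fun θ hθ => ⟨hθ.1, le_trans h hθ.2⟩)

end ginv

lemma ginv_one (hF : IsCDF a b F) (hf_pos : ∀ x ∈ Set.Icc a b, 0 < f x)
    (hf_int : IntegrableOn f (Set.Icc a b))
    (hFf : ∀ x ∈ Set.Icc a b, F x = ∫ t in Set.Icc a x, f t)
    (hab : a ≤ b) : ginv a b F 1 = b := by
  refine le_antisymm (ginv_mem hF hab le_rfl).2 ?_
  refine le_csInf (gS_nonempty hF hab le_rfl) ?_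
  intro θ hθ
  by_contra hc
  push_neg at hc
  have h1 : F θ < F b := F_strict hF hf_pos hf_int hFf hθ.1.1 hc le_rfl
  rw [hF.2.2.2 b le_rfl] at h1
  linarith [hθ.2]

lemma g_lt_b (hF : IsCDF a b F) (hq : q ∈ Set.Ioo (0:ℝ) 1)
    (hf_int : IntegrableOn f (Set.Icc a b))
    (hFf : ∀ x ∈ Set.Icc a b, F x = ∫ t in Set.Icc a x, f t)
    (hab : a < b) : ginv a b F q < b := by
  have hFa : F a = 0 := cdf_Fa hF hFf hab.le
  have hFb : F b = 1 := hF.2.2.2 b le_rfl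
  have hIVT := intermediate_value_Icc hab.le (F_contOn hf_int hFf)
  have hqmem : q ∈ Set.Icc (F a) (F b) := by
    rw [hFa, hFb]; exact ⟨hq.1.le, hq.2.le⟩
  obtain ⟨θ, hθmem, hθval⟩ := hIVT hqmem
  have h1 : ginv a b F q ≤ θ :=
    ginv_le hF hFa hab.le (le_of_eq hθval.symm) hq.1
  have h2 : θ < b := by
    rcases eq_or_lt_of_le hθmem.2 with h | h
    · exfalso; rw [h, hFb] at hθval; linarith [hq.2]
    · exact h
  linarith

lemma a_lt_g (hF : IsCDF a b F) (hq : q ∈ Set.Ioo (0:ℝ) 1) (hFa : F a = 0)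
    (hab : a ≤ b) : a < ginv a b F q := by
  rcases eq_or_lt_of_le (ginv_mem hF hab hq.2.le).1 with h | h
  · exfalso
    have := F_ginv_ge hF hab hq.2.le
    rw [← h, hFa] at this
    linarith [hq.1]
  · exact h

section tau

variable (τ : Measure {G : ℝ → ℝ // IsCDF a b G}) [IsProbabilityMeasure τ]

lemma eval_measurable (x : ℝ) :
    Measurable fun G : {G : ℝ → ℝ // IsCDF a b G} => G.1 x :=
  (measurable_pi_apply x).comp measurable_subtype_coe

lemma eval_integrable (x : ℝ) :
    Integrable (fun G : {G : ℝ → ℝ // IsCDF a b G} => G.1 x) τ := by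
  refine (integrable_const (1:ℝ)).mono' (eval_measurable x).aestronglyMeasurable ?_
  refine ae_of_all _ fun G => ?_
  rw [Real.norm_eq_abs, abs_le]
  constructor
  · linarith [cdf_nonneg G.2 x]
  · exact cdf_le_one G.2 x

variable {τ}

/-- Region I equality-case lemma. -/
lemma regionI (hq : q ∈ Set.Ioo (0:ℝ) 1)
    (hbary : ∀ x : ℝ, (∫ G, (G : {G : ℝ → ℝ // IsCDF a b G}).1 x ∂τ) = F x)
    {χ : {G : ℝ → ℝ // IsCDF a b G} → ℝ} (hχm : Measurable χ)
    (hχq : ∀ G : {G : ℝ → ℝ // IsCDF a b G}, χ G ∈ QSet a b q G.1) (x : ℝ)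
    (hx : (τ {G | χ G ≤ x}).toReal = F x / q) :
    ∀ᵐ G ∂τ, G.1 x = if χ G ≤ x then q else 0 := by
  set A : Set {G : ℝ → ℝ // IsCDF a b G} := {G | χ G ≤ x} with hA
  have hAm : MeasurableSet A := hχm measurableSet_Iic
  set k : {G : ℝ → ℝ // IsCDF a b G} → ℝ :=
    fun G => G.1 x - A.indicator (fun _ => q) G with hk
  have hk0 : ∀ G, 0 ≤ k G := by
    intro G
    by_cases hmem : G ∈ A
    · rw [hk]
      simp only [Set.indicator_of_mem hmem]
      have h1 : q ≤ G.1 (χ G) := (hχq G).2.2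
      have h2 : G.1 (χ G) ≤ G.1 x := G.2.1 hmem
      linarith
    · rw [hk]
      simp only [Set.indicator_of_notMem hmem]
      simpa using cdf_nonneg G.2 x
  have hki : Integrable k τ :=
    (eval_integrable τ x).sub ((integrable_const q).indicator hAm)
  have hint : ∫ G, k G ∂τ = 0 := by
    rw [hk]
    rw [integral_sub (eval_integrable τ x) ((integrable_const q).indicator hAm)]
    rw [hbary x, integral_indicator_const _ hAm]
    rw [smul_eq_mul, measureReal_def, hx]
    have hq0 : q ≠ 0 := ne_of_gt hq.1
    field_simp
    ring
  have hae := (integral_eq_zero_iff_of_nonneg hk0 hki).mp hint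
  filter_upwards [hae] with G hG
  have h0 : G.1 x - A.indicator (fun _ => q) G = 0 := by
    have := hG
    simp only [hk, Pi.zero_apply] at this
    exact this
  have h1 : G.1 x = A.indicator (fun _ => q) G := by linarith
  rw [h1, Set.indicator_apply]
  rfl

/-- Region III equality-case lemma. -/
lemma regionIII (hq : q ∈ Set.Ioo (0:ℝ) 1)
    (hbary : ∀ x : ℝ, (∫ G, (G : {G : ℝ → ℝ // IsCDF a b G}).1 x ∂τ) = F x)
    {χ : {G : ℝ → ℝ // IsCDF a b G} → ℝ} (hχm : Measurable χ)
    (hχq : ∀ G : {G : ℝ → ℝ // IsCDF a b G}, χ G ∈ QSet a b q G.1) (x : ℝ)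
    (hx : (τ {G | χ G ≤ x}).toReal = (F x - q) / (1 - q)) :
    ∀ᵐ G ∂τ, G.1 x = if χ G ≤ x then 1 else q := by
  set A : Set {G : ℝ → ℝ // IsCDF a b G} := {G | χ G ≤ x} with hA
  have hAm : MeasurableSet A := hχm measurableSet_Iic
  set u : {G : ℝ → ℝ // IsCDF a b G} → ℝ :=
    fun G => q + (1 - q) * A.indicator (fun _ => (1:ℝ)) G with hu
  have huval : ∀ G, u G = if χ G ≤ x then 1 else q := by
    intro G
    by_cases hmem : G ∈ A
    · rw [hu]; simp only [Set.indicator_of_mem hmem]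
      rw [if_pos (show χ G ≤ x from hmem)]; ring
    · rw [hu]; simp only [Set.indicator_of_notMem hmem]
      rw [if_neg (show ¬ χ G ≤ x from hmem)]; ring
  have hui : Integrable u τ :=
    (integrable_const q).add (((integrable_const (1:ℝ)).indicator hAm).const_mul _)
  set k : {G : ℝ → ℝ // IsCDF a b G} → ℝ := fun G => u G - G.1 x with hk
  have hk0 : ∀ G, 0 ≤ k G := by
    intro G
    show 0 ≤ u G - G.1 x
    rw [huval G]
    by_cases hmem : χ G ≤ x
    · rw [if_pos hmem]
      linarith [cdf_le_one G.2 x]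
    · rw [if_neg hmem]
      push_neg at hmem
      have h1 : G.1 x ≤ Function.leftLim G.1 (χ G) := G.2.1.le_leftLim hmem
      have h2 : Function.leftLim G.1 (χ G) ≤ q := (hχq G).2.1
      linarith
  have hki : Integrable k τ := hui.sub (eval_integrable τ x)
  have hint : ∫ G, k G ∂τ = 0 := by
    rw [hk]
    rw [integral_sub hui (eval_integrable τ x), hbary x, hu]
    rw [integral_add (integrable_const q)
      (((integrable_const (1:ℝ)).indicator hAm).const_mul _)]
    rw [integral_const, integral_const_mul, integral_indicator_const _ hAm]
    simp only [measureReal_def, measure_univ, ENNReal.toReal_one, smul_eq_mul, one_mul, mul_one]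
    rw [hx]
    have h1q : (1:ℝ) - q ≠ 0 := by linarith [hq.2]
    field_simp
    ring
  have hae := (integral_eq_zero_iff_of_nonneg hk0 hki).mp hint
  filter_upwards [hae] with G hG
  have h0 : u G - G.1 x = 0 := by
    have := hG
    simp only [hk, Pi.zero_apply] at this
    exact this
  have h1 : G.1 x = u G := by linarith
  rw [h1, huval G]

end tau

section Hval

variable {p : ℝ}

lemma HstepI (hF : IsCDF a b F) (hq : q ∈ Set.Ioo (0:ℝ) 1) (hab : a ≤ b)
    (hp1 : p ≤ 1) (hxp : F x < q * p) :
    Hstep a b q F p x = F x / q := by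
  have hqp1 : q * p ≤ 1 := by nlinarith [hq.1, hq.2]
  have hcond : x < ginv a b F (q * p) := lt_ginv hF hab hxp hqp1
  rw [Hstep]
  simp only [if_pos hcond]
  have : F x / q ≤ 1 := by
    rw [div_le_one hq.1]
    nlinarith [hq.1, hq.2]
  exact min_eq_left this

lemma HstepIII (hF : IsCDF a b F) (hq : q ∈ Set.Ioo (0:ℝ) 1) (hFa : F a = 0)
    (hab : a ≤ b) (hp0 : 0 ≤ p) (hp1 : p ≤ 1) (hxp : q + (1 - q) * p ≤ F x) :
    Hstep a b q F p x = (F x - q) / (1 - q) := by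
  have hFxq : q ≤ F x := by nlinarith [hq.1, hq.2]
  have hxa : ¬ x < a := by
    intro hc
    have := hF.2.2.1 x hc
    nlinarith [hq.1]
  have h1 : ¬ x < ginv a b F (q * p) := by
    rcases eq_or_lt_of_le hp0 with hp | hp
    · rw [← hp, mul_zero, ginv_nonpos hF hab le_rfl]
      exact hxa
    · have hqp : 0 < q * p := mul_pos hq.1 hp
      have hqple : q * p ≤ F x := by nlinarith [hq.1, hq.2]
      exact not_lt.2 (ginv_le hF hFa hab hqple hqp)
  have h2 : ¬ x < ginv a b F (q + (1 - q) * p) := by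
    have hpos : 0 < q + (1 - q) * p := by nlinarith [hq.1, hq.2]
    exact not_lt.2 (ginv_le hF hFa hab hxp hpos)
  rw [Hstep]
  simp only [if_neg h1, if_neg h2]
  exact max_eq_right (div_nonneg (by linarith) (by linarith [hq.2]))

lemma Hstep1_eq (hF : IsCDF a b F) (hq : q ∈ Set.Ioo (0:ℝ) 1) (hFa : F a = 0)
    (hf_pos : ∀ x ∈ Set.Icc a b, 0 < f x)
    (hf_int : IntegrableOn f (Set.Icc a b))
    (hFf : ∀ x ∈ Set.Icc a b, F x = ∫ t in Set.Icc a x, f t)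
    (hab : a ≤ b) (x : ℝ) :
    Hstep a b q F 1 x = min (F x / q) 1 := by
  rcases lt_or_ge (F x) q with h | h
  · rw [HstepI hF hq hab le_rfl (by rwa [mul_one])]
    exact (min_eq_left (by rw [div_le_one hq.1]; linarith [hq.2])).symm
  · have hxa : ¬ x < a := by
      intro hc
      have := hF.2.2.1 x hc
      nlinarith [hq.1]
    have h1 : ¬ x < ginv a b F (q * 1) := by
      rw [mul_one]
      exact not_lt.2 (ginv_le hF hFa hab h hq.1)
    have hmin : min (F x / q) 1 = 1 := by
      refine min_eq_right ?_
      rw [le_div_iff₀ hq.1, one_mul]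
      exact h
    rw [Hstep]
    simp only [if_neg h1]
    have hg1 : ginv a b F (q + (1 - q) * 1) = b := by
      have : q + (1 - q) * 1 = 1 := by ring
      rw [this]
      exact ginv_one hF hf_pos hf_int hFf hab
    rw [hg1, hmin]
    rcases lt_or_ge x b with hxb | hxb
    · rw [if_pos hxb]
    · rw [if_neg (not_lt.2 hxb)]
      rw [hF.2.2.2 x hxb]
      rw [max_eq_right (div_nonneg (by linarith [hq.2]) (by linarith [hq.2]))]
      rw [div_self (by linarith [hq.2] : (1:ℝ) - q ≠ 0)]

lemma Hstep0_eq (hF : IsCDF a b F) (hq : q ∈ Set.Ioo (0:ℝ) 1) (hFa : F a = 0)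
    (hab : a ≤ b) (y : ℝ) :
    Hstep a b q F 0 y = max 0 ((F y - q) / (1 - q)) := by
  rcases le_or_gt q (F y) with h | h
  · rw [HstepIII hF hq hFa hab le_rfl zero_le_one (by linarith)]
    exact (max_eq_right (div_nonneg (by linarith) (by linarith [hq.2]))).symm
  · have hmax : max 0 ((F y - q) / (1 - q)) = 0 := by
      refine max_eq_left ?_
      apply div_nonpos_of_nonpos_of_nonneg <;> linarith [hq.2]
    rw [hmax, Hstep]
    rcases lt_or_ge y a with hya | hya
    · have hcond : y < ginv a b F (q * 0) := by
        rw [mul_zero, ginv_nonpos hF hab le_rfl]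
        exact hya
      simp only [if_pos hcond]
      rw [hF.2.2.1 y hya]
      simp
    · have h1 : ¬ y < ginv a b F (q * 0) := by
        rw [mul_zero, ginv_nonpos hF hab le_rfl]
        exact not_lt.2 hya
      have h2 : y < ginv a b F (q + (1 - q) * 0) := by
        have : q + (1 - q) * 0 = q := by ring
        rw [this]
        exact lt_ginv hF hab h hq.2.le
      simp only [if_neg h1, if_pos h2]

end Hval

section Main

variable {τ : Measure {G : ℝ → ℝ // IsCDF a b G}} [IsProbabilityMeasure τ]
variable {χ₁ χ₀ : {G : ℝ → ℝ // IsCDF a b G} → ℝ}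

lemma ae_of_prob_one {S : Set {G : ℝ → ℝ // IsCDF a b G}} (hSm : MeasurableSet S)
    (h : τ S = 1) : ∀ᵐ G ∂τ, G ∈ S := by
  rw [ae_iff]
  have hc := measure_compl hSm (measure_ne_top τ S)
  rw [h, measure_univ, tsub_self] at hc
  rw [show {G | ¬ G ∈ S} = Sᶜ from rfl]
  exact hc

lemma marg1 (hq : q ∈ Set.Ioo (0:ℝ) 1) (hF : IsCDF a b F) (hab : a < b)
    (hf_pos : ∀ x ∈ Set.Icc a b, 0 < f x)
    (hf_int : IntegrableOn f (Set.Icc a b))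
    (hFf : ∀ x ∈ Set.Icc a b, F x = ∫ t in Set.Icc a x, f t)
    (hH1 : ∀ z : ℝ, Hstep a b q F 1 z = (τ {G | χ₁ G ≤ z}).toReal)
    (x : ℝ) : τ {G | χ₁ G ≤ x} = ENNReal.ofReal (min (F x / q) 1) := by
  have h := Hstep1_eq hF hq (cdf_Fa hF hFf hab.le) hf_pos hf_int hFf hab.le x
  rw [hH1 x] at h
  rw [← h, ENNReal.ofReal_toReal (measure_ne_top τ _)]

lemma marg0 (hq : q ∈ Set.Ioo (0:ℝ) 1) (hF : IsCDF a b F) (hab : a < b)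
    (hFf : ∀ x ∈ Set.Icc a b, F x = ∫ t in Set.Icc a x, f t)
    (hH0 : ∀ z : ℝ, Hstep a b q F 0 z = (τ {G | χ₀ G ≤ z}).toReal)
    (y : ℝ) :
    τ {G | χ₀ G ≤ y} = ENNReal.ofReal (max 0 ((F y - q) / (1 - q))) := by
  have h := Hstep0_eq hF hq (cdf_Fa hF hFf hab.le) hab.le y
  rw [hH0 y] at h
  rw [← h, ENNReal.ofReal_toReal (measure_ne_top τ _)]

lemma hXg (hq : q ∈ Set.Ioo (0:ℝ) 1) (hF : IsCDF a b F) (hab : a < b)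
    (hf_pos : ∀ x ∈ Set.Icc a b, 0 < f x)
    (hf_int : IntegrableOn f (Set.Icc a b))
    (hFf : ∀ x ∈ Set.Icc a b, F x = ∫ t in Set.Icc a x, f t)
    (hχ₁m : Measurable χ₁)
    (hH1 : ∀ z : ℝ, Hstep a b q F 1 z = (τ {G | χ₁ G ≤ z}).toReal) :
    ∀ᵐ G ∂τ, χ₁ G ≤ ginv a b F q := by
  have hFg : q ≤ F (ginv a b F q) := F_ginv_ge hF hab.le hq.2.le
  have h1 : τ {G | χ₁ G ≤ ginv a b F q} = 1 := by
    rw [marg1 hq hF hab hf_pos hf_int hFf hH1]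
    rw [min_eq_right (by rw [le_div_iff₀ hq.1, one_mul]; exact hFg)]
    simp
  exact ae_of_prob_one (hχ₁m measurableSet_Iic) h1

lemma hgY (hq : q ∈ Set.Ioo (0:ℝ) 1) (hF : IsCDF a b F) (hab : a < b)
    (hFf : ∀ x ∈ Set.Icc a b, F x = ∫ t in Set.Icc a x, f t)
    (hχ₀m : Measurable χ₀)
    (hH0 : ∀ z : ℝ, Hstep a b q F 0 z = (τ {G | χ₀ G ≤ z}).toReal) :
    ∀ᵐ G ∂τ, ginv a b F q ≤ χ₀ G := by
  have hnull : τ {G | χ₀ G < ginv a b F q} = 0 := by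
    have hsub : {G : {G : ℝ → ℝ // IsCDF a b G} | χ₀ G < ginv a b F q} ⊆
        ⋃ (r : ℚ) (_ : (r:ℝ) < ginv a b F q), {G | χ₀ G ≤ (r:ℝ)} := by
      intro G hG
      obtain ⟨r, hr1, hr2⟩ := exists_rat_btwn (show χ₀ G < ginv a b F q from hG)
      exact Set.mem_iUnion.2 ⟨r, Set.mem_iUnion.2 ⟨hr2, hr1.le⟩⟩
    refine measure_mono_null hsub (measure_iUnion_null fun r => ?_)
    by_cases hr : (r:ℝ) < ginv a b F q
    · rw [Set.iUnion_eq_if, if_pos hr]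
      rw [marg0 hq hF hab hFf hH0]
      have hFr : F r ≤ q := by
        by_contra hc
        push_neg at hc
        exact absurd (ginv_le hF (cdf_Fa hF hFf hab.le) hab.le hc.le hq.1)
          (not_le.2 hr)
      rw [max_eq_left (div_nonpos_of_nonpos_of_nonneg (by linarith)
        (by linarith [hq.2]))]
      simp
    · simp [hr]
  rw [ae_iff]
  refine measure_mono_null (fun G hG => ?_) hnull
  simpa using hG

lemma ae_rep_at (hq : q ∈ Set.Ioo (0:ℝ) 1) (hF : IsCDF a b F) (hab : a < b)
    (hf_pos : ∀ x ∈ Set.Icc a b, 0 < f x)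
    (hf_int : IntegrableOn f (Set.Icc a b))
    (hFf : ∀ x ∈ Set.Icc a b, F x = ∫ t in Set.Icc a x, f t)
    (hbary : ∀ x : ℝ, (∫ G, (G : {G : ℝ → ℝ // IsCDF a b G}).1 x ∂τ) = F x)
    (hχ₁m : Measurable χ₁) (hχ₀m : Measurable χ₀)
    (hχ₁q : ∀ G : {G : ℝ → ℝ // IsCDF a b G}, χ₁ G ∈ QSet a b q G.1)
    (hχ₀q : ∀ G : {G : ℝ → ℝ // IsCDF a b G}, χ₀ G ∈ QSet a b q G.1)
    (hH1 : ∀ z : ℝ, Hstep a b q F 1 z = (τ {G | χ₁ G ≤ z}).toReal)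
    (hH0 : ∀ z : ℝ, Hstep a b q F 0 z = (τ {G | χ₀ G ≤ z}).toReal)
    (x : ℝ) :
    ∀ᵐ G ∂τ, G.1 x = q * (if χ₁ G ≤ x then 1 else 0)
      + (1 - q) * (if χ₀ G ≤ x then 1 else 0) := by
  have hFa : F a = 0 := cdf_Fa hF hFf hab.le
  rcases lt_or_ge (F x) q with h | h
  · have hRI : ∀ᵐ G ∂τ, G.1 x = if χ₁ G ≤ x then q else 0 := by
      refine regionI hq hbary hχ₁m hχ₁q x ?_
      rw [← hH1 x, HstepI hF hq hab.le le_rfl (by rwa [mul_one])]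
    have hY : ∀ᵐ G ∂τ, ¬ χ₀ G ≤ x := by
      have h0 : τ {G | χ₀ G ≤ x} = 0 := by
        rw [marg0 hq hF hab hFf hH0]
        rw [max_eq_left (div_nonpos_of_nonpos_of_nonneg (by linarith)
          (by linarith [hq.2]))]
        simp
      rw [ae_iff]
      refine measure_mono_null (fun G hG => ?_) h0
      simpa using hG
    filter_upwards [hRI, hY] with G h1 h2
    rw [h1, if_neg h2]
    by_cases hc : χ₁ G ≤ x
    · rw [if_pos hc, if_pos hc]; ring
    · rw [if_neg hc, if_neg hc]; ring
  · have hRIII : ∀ᵐ G ∂τ, G.1 x = if χ₀ G ≤ x then 1 else q := by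
      refine regionIII hq hbary hχ₀m hχ₀q x ?_
      rw [← hH0 x, HstepIII hF hq hFa hab.le le_rfl zero_le_one (by linarith)]
    have hX : ∀ᵐ G ∂τ, χ₁ G ≤ x := by
      have h1 : τ {G | χ₁ G ≤ x} = 1 := by
        rw [marg1 hq hF hab hf_pos hf_int hFf hH1]
        rw [min_eq_right (by rw [le_div_iff₀ hq.1, one_mul]; exact h)]
        simp
      exact ae_of_prob_one (hχ₁m measurableSet_Iic) h1
    filter_upwards [hRIII, hX] with G h1 h2
    rw [h1, if_pos h2]
    by_cases hc : χ₀ G ≤ x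
    · rw [if_pos hc, if_pos hc]; ring
    · rw [if_neg hc, if_neg hc]; ring

lemma ae_rep (hq : q ∈ Set.Ioo (0:ℝ) 1) (hF : IsCDF a b F) (hab : a < b)
    (hf_pos : ∀ x ∈ Set.Icc a b, 0 < f x)
    (hf_int : IntegrableOn f (Set.Icc a b))
    (hFf : ∀ x ∈ Set.Icc a b, F x = ∫ t in Set.Icc a x, f t)
    (hbary : ∀ x : ℝ, (∫ G, (G : {G : ℝ → ℝ // IsCDF a b G}).1 x ∂τ) = F x)
    (hχ₁m : Measurable χ₁) (hχ₀m : Measurable χ₀)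
    (hχ₁q : ∀ G : {G : ℝ → ℝ // IsCDF a b G}, χ₁ G ∈ QSet a b q G.1)
    (hχ₀q : ∀ G : {G : ℝ → ℝ // IsCDF a b G}, χ₀ G ∈ QSet a b q G.1)
    (hH1 : ∀ z : ℝ, Hstep a b q F 1 z = (τ {G | χ₁ G ≤ z}).toReal)
    (hH0 : ∀ z : ℝ, Hstep a b q F 0 z = (τ {G | χ₀ G ≤ z}).toReal) :
    ∀ᵐ G ∂τ, ∀ θ : ℝ, G.1 θ = q * (if χ₁ G ≤ θ then 1 else 0)
      + (1 - q) * (if χ₀ G ≤ θ then 1 else 0) := by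
  have hall : ∀ᵐ G ∂τ, ∀ r : ℚ, G.1 r = q * (if χ₁ G ≤ (r:ℝ) then 1 else 0)
      + (1 - q) * (if χ₀ G ≤ (r:ℝ) then 1 else 0) :=
    ae_all_iff.2 fun r =>
      ae_rep_at hq hF hab hf_pos hf_int hFf hbary hχ₁m hχ₀m hχ₁q hχ₀q hH1 hH0 (r:ℝ)
  filter_upwards [hall] with G hG
  intro θ
  have hrat : ∀ n : ℕ, ∃ r : ℚ, θ < (r:ℝ) ∧ (r:ℝ) < θ + 1/(n+1) := by
    intro n
    refine exists_rat_btwn ?_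
    have : (0:ℝ) < 1/(n+1) := by positivity
    linarith
  choose u hu1 hu2 using hrat
  have hutend : Tendsto (fun n => (u n : ℝ)) atTop (𝓝 θ) := by
    have h0 : Tendsto (fun n : ℕ => θ + 1/(n+1:ℝ)) atTop (𝓝 θ) := by
      have h1 := tendsto_one_div_add_atTop_nhds_zero_nat (𝕜 := ℝ)
      have h2 : Tendsto (fun _ : ℕ => θ) atTop (𝓝 θ) := tendsto_const_nhds
      have h3 := h2.add h1
      simpa using h3
    exact tendsto_of_tendsto_of_tendsto_of_le_of_le tendsto_const_nhds h0
      (fun n => (hu1 n).le) (fun n => (hu2 n).le)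
  have hGc : Tendsto (fun n => G.1 (u n)) atTop (𝓝 (G.1 θ)) := by
    refine (G.2.2.1 θ).tendsto.comp ?_
    rw [tendsto_nhdsWithin_iff]
    exact ⟨hutend, Eventually.of_forall fun n => (hu1 n).le⟩
  have h1 : ∀ᶠ n in atTop, (if χ₁ G ≤ (u n:ℝ) then (1:ℝ) else 0)
      = (if χ₁ G ≤ θ then 1 else 0) := by
    by_cases hc : χ₁ G ≤ θ
    · exact Eventually.of_forall fun n => by
        rw [if_pos (hc.trans (hu1 n).le), if_pos hc]
    · push_neg at hc
      filter_upwards [hutend.eventually (gt_mem_nhds hc)] with n hn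
      rw [if_neg (not_le.2 hn), if_neg (not_le.2 hc)]
  have h2 : ∀ᶠ n in atTop, (if χ₀ G ≤ (u n:ℝ) then (1:ℝ) else 0)
      = (if χ₀ G ≤ θ then 1 else 0) := by
    by_cases hc : χ₀ G ≤ θ
    · exact Eventually.of_forall fun n => by
        rw [if_pos (hc.trans (hu1 n).le), if_pos hc]
    · push_neg at hc
      filter_upwards [hutend.eventually (gt_mem_nhds hc)] with n hn
      rw [if_neg (not_le.2 hn), if_neg (not_le.2 hc)]
  have hstep : ∀ᶠ n in atTop, G.1 (u n) = q * (if χ₁ G ≤ θ then 1 else 0)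
      + (1 - q) * (if χ₀ G ≤ θ then 1 else 0) := by
    filter_upwards [h1, h2] with n hn1 hn2
    rw [hG (u n), hn1, hn2]
  have hconst : Tendsto (fun n => G.1 (u n)) atTop
      (𝓝 (q * (if χ₁ G ≤ θ then 1 else 0)
        + (1 - q) * (if χ₀ G ≤ θ then 1 else 0))) :=
    Tendsto.congr' (hstep.mono fun n h => h.symm) tendsto_const_nhds
  exact tendsto_nhds_unique hGc hconst

end Main

section Joint

variable {τ : Measure {G : ℝ → ℝ // IsCDF a b G}} [IsProbabilityMeasure τ]
variable {χ₁ χ₀ : {G : ℝ → ℝ // IsCDF a b G} → ℝ} {p : ℝ}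

lemma nullA (hq : q ∈ Set.Ioo (0:ℝ) 1) (hF : IsCDF a b F) (hab : a < b)
    (hFf : ∀ x ∈ Set.Icc a b, F x = ∫ t in Set.Icc a x, f t)
    (hbary : ∀ x : ℝ, (∫ G, (G : {G : ℝ → ℝ // IsCDF a b G}).1 x ∂τ) = F x)
    (hχ₁m : Measurable χ₁) (hχ₀m : Measurable χ₀)
    (hχ₁q : ∀ G : {G : ℝ → ℝ // IsCDF a b G}, χ₁ G ∈ QSet a b q G.1)
    (hχ₀q : ∀ G : {G : ℝ → ℝ // IsCDF a b G}, χ₀ G ∈ QSet a b q G.1)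
    (hH1 : ∀ z : ℝ, Hstep a b q F 1 z = (τ {G | χ₁ G ≤ z}).toReal)
    (hH0 : ∀ z : ℝ, Hstep a b q F 0 z = (τ {G | χ₀ G ≤ z}).toReal)
    (himp : ∀ p ∈ Set.Icc (0:ℝ) 1, ImplementedBy a b q τ (Hstep a b q F p))
    (x y : ℝ) (hp : p ∈ Set.Icc (0:ℝ) 1) (h1 : F x < q * p)
    (h2 : q + (1 - q) * p ≤ F y) :
    τ {G | χ₁ G ≤ x ∧ y < χ₀ G} = 0 := by
  have hFa : F a = 0 := cdf_Fa hF hFf hab.le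
  obtain ⟨χ, hχm, hχq, hH⟩ := himp p hp
  have hqpq : q * p ≤ q := by nlinarith [hq.1, hp.2]
  have hRIχ : ∀ᵐ G ∂τ, G.1 x = if χ G ≤ x then q else 0 :=
    regionI hq hbary hχm hχq x
      (by rw [← hH x, HstepI hF hq hab.le hp.2 h1])
  have hRI1 : ∀ᵐ G ∂τ, G.1 x = if χ₁ G ≤ x then q else 0 :=
    regionI hq hbary hχ₁m hχ₁q x
      (by rw [← hH1 x, HstepI hF hq hab.le le_rfl (by rw [mul_one]; linarith)])
  have hqy : q ≤ F y := by nlinarith [hq.1, hq.2, hp.1]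
  have hRIIIχ : ∀ᵐ G ∂τ, G.1 y = if χ G ≤ y then 1 else q :=
    regionIII hq hbary hχm hχq y
      (by rw [← hH y, HstepIII hF hq hFa hab.le hp.1 hp.2 h2])
  have hRIII0 : ∀ᵐ G ∂τ, G.1 y = if χ₀ G ≤ y then 1 else q :=
    regionIII hq hbary hχ₀m hχ₀q y
      (by rw [← hH0 y, HstepIII hF hq hFa hab.le le_rfl zero_le_one (by linarith)])
  have e1 : ∀ᵐ G ∂τ, (χ₁ G ≤ x ↔ χ G ≤ x) := by
    filter_upwards [hRI1, hRIχ] with G hGa hGb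
    by_cases hA : χ₁ G ≤ x <;> by_cases hB : χ G ≤ x
    · exact iff_of_true hA hB
    · exfalso
      rw [if_pos hA] at hGa; rw [if_neg hB] at hGb
      rw [hGa] at hGb; exact (ne_of_gt hq.1) hGb
    · exfalso
      rw [if_neg hA] at hGa; rw [if_pos hB] at hGb
      rw [hGa] at hGb; exact (ne_of_gt hq.1) hGb.symm
    · exact iff_of_false hA hB
  have e2 : ∀ᵐ G ∂τ, (χ₀ G ≤ y ↔ χ G ≤ y) := by
    filter_upwards [hRIII0, hRIIIχ] with G hGa hGb
    by_cases hA : χ₀ G ≤ y <;> by_cases hB : χ G ≤ y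
    · exact iff_of_true hA hB
    · exfalso
      rw [if_pos hA] at hGa; rw [if_neg hB] at hGb
      rw [hGa] at hGb; exact (ne_of_lt hq.2) hGb.symm
    · exfalso
      rw [if_neg hA] at hGa; rw [if_pos hB] at hGb
      rw [hGa] at hGb; exact (ne_of_lt hq.2) hGb
    · exact iff_of_false hA hB
  have hcong : τ {G | χ₁ G ≤ x ∧ y < χ₀ G} = τ {G | χ G ≤ x ∧ y < χ G} := by
    refine measure_congr ?_
    rw [Filter.eventuallyEq_set]
    filter_upwards [e1, e2] with G hG1 hG2
    show χ₁ G ≤ x ∧ y < χ₀ G ↔ χ G ≤ x ∧ y < χ G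
    constructor
    · rintro ⟨ha, hb⟩
      exact ⟨hG1.1 ha, not_le.1 fun hc => (not_le.2 hb) (hG2.2 hc)⟩
    · rintro ⟨ha, hb⟩
      exact ⟨hG1.2 ha, not_le.1 fun hc => (not_le.2 hb) (hG2.1 hc)⟩
  rw [hcong]
  have hxy : x < y := by
    by_contra hc
    push_neg at hc
    have := hF.1 hc
    nlinarith [hq.1, hq.2, hp.1, hp.2]
  have : {G : {G : ℝ → ℝ // IsCDF a b G} | χ G ≤ x ∧ y < χ G} = ∅ := by
    rw [Set.eq_empty_iff_forall_notMem]
    rintro G ⟨ha, hb⟩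
    linarith
  rw [this, measure_empty]

lemma nullB (hq : q ∈ Set.Ioo (0:ℝ) 1) (hF : IsCDF a b F) (hab : a < b)
    (hf_pos : ∀ x ∈ Set.Icc a b, 0 < f x)
    (hf_int : IntegrableOn f (Set.Icc a b))
    (hFf : ∀ x ∈ Set.Icc a b, F x = ∫ t in Set.Icc a x, f t)
    (hbary : ∀ x : ℝ, (∫ G, (G : {G : ℝ → ℝ // IsCDF a b G}).1 x ∂τ) = F x)
    (hχ₁m : Measurable χ₁) (hχ₀m : Measurable χ₀)
    (hχ₁q : ∀ G : {G : ℝ → ℝ // IsCDF a b G}, χ₁ G ∈ QSet a b q G.1)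
    (hχ₀q : ∀ G : {G : ℝ → ℝ // IsCDF a b G}, χ₀ G ∈ QSet a b q G.1)
    (hH1 : ∀ z : ℝ, Hstep a b q F 1 z = (τ {G | χ₁ G ≤ z}).toReal)
    (hH0 : ∀ z : ℝ, Hstep a b q F 0 z = (τ {G | χ₀ G ≤ z}).toReal)
    (himp : ∀ p ∈ Set.Icc (0:ℝ) 1, ImplementedBy a b q τ (Hstep a b q F p))
    (x y : ℝ) (hlt : max 0 ((F y - q) / (1 - q)) < min (F x / q) 1) :
    τ {G | x < χ₁ G ∧ χ₀ G ≤ y} = 0 := by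
  have hFa : F a = 0 := cdf_Fa hF hFf hab.le
  set P : ℝ := max 0 ((F y - q) / (1 - q)) with hP
  have hp : P ∈ Set.Icc (0:ℝ) 1 := by
    constructor
    · exact le_max_left _ _
    · refine max_le zero_le_one ?_
      rw [div_le_one (by linarith [hq.2])]
      linarith [cdf_le_one hF y]
  obtain ⟨χ, hχm, hχq, hH⟩ := himp P hp
  have hrep := ae_rep hq hF hab hf_pos hf_int hFf hbary hχ₁m hχ₀m hχ₁q hχ₀q hH1 hH0
  have hXg' := hXg hq hF hab hf_pos hf_int hFf hχ₁m hH1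
  have hgY' := hgY hq hF hab hFf hχ₀m hH0
  have hXχ : ∀ᵐ G ∂τ, χ₁ G ≤ χ G ∧ χ G ≤ χ₀ G := by
    filter_upwards [hrep, hXg', hgY'] with G hG hx1 hy1
    have hq1 : q ≤ G.1 (χ G) := (hχq G).2.2
    have hll : Function.leftLim G.1 (χ G) ≤ q := (hχq G).2.1
    constructor
    · by_contra hc
      push_neg at hc
      have hv := hG (χ G)
      rw [if_neg (not_le.2 hc), if_neg (not_le.2 (lt_of_lt_of_le hc
        (le_trans hx1 hy1)))] at hv
      rw [hv] at hq1
      nlinarith [hq.1]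
    · by_contra hc
      push_neg at hc
      have hmono : G.1 (χ₀ G) ≤ Function.leftLim G.1 (χ G) := G.2.1.le_leftLim hc
      have hv := hG (χ₀ G)
      rw [if_pos (le_trans hx1 hy1), if_pos le_rfl] at hv
      rw [hv] at hmono
      nlinarith [hq.2]
  have hHy : (τ {G | χ G ≤ y}).toReal ≤ P := by
    rw [← hH y, Hstep]
    split_ifs with hc1 hc2
    · rcases eq_or_lt_of_le hp.1 with hp0 | hp0
      · rw [← hp0, mul_zero, ginv_nonpos hF hab.le le_rfl] at hc1
        rw [cdf_le_a hF hFa hc1.le]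
        simp [hp.1]
      · have hqP : 0 < q * P := mul_pos hq.1 hp0
        have hFy : F y < q * P := by
          by_contra hc
          push_neg at hc
          exact absurd (ginv_le hF hFa hab.le hc hqP) (not_le.2 hc1)
        calc min (F y / q) 1 ≤ F y / q := min_le_left _ _
        _ ≤ P := by rw [div_le_iff₀ hq.1]; linarith
    · exact le_rfl
    · exact le_of_eq rfl
  have hHx : P ≤ (τ {G | χ G ≤ x}).toReal := by
    rw [← hH x, Hstep]
    split_ifs with hc1 hc2
    · exact hlt.le
    · exact le_rfl
    · push_neg at hc2
      have hle : q + (1 - q) * P ≤ F x := by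
        have h1 : q + (1 - q) * P ≤ 1 := by nlinarith [hq.1, hq.2, hp.1, hp.2]
        exact le_trans (F_ginv_ge hF hab.le h1) (hF.1 hc2)
      calc P ≤ (F x - q) / (1 - q) := by
            rw [le_div_iff₀ (by linarith [hq.2])]; linarith
      _ ≤ max 0 ((F x - q) / (1 - q)) := le_max_right _ _
  have hyx : τ {G | χ G ≤ y} ≤ τ {G | χ G ≤ x} :=
    (ENNReal.toReal_le_toReal (measure_ne_top τ _) (measure_ne_top τ _)).1
      (hHy.trans hHx)
  have hT : τ {G : {G : ℝ → ℝ // IsCDF a b G} | x < χ G ∧ χ G ≤ y} = 0 := by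
    rcases lt_or_ge y x with hyltx | hxley
    · have : {G : {G : ℝ → ℝ // IsCDF a b G} | x < χ G ∧ χ G ≤ y} = ∅ := by
        rw [Set.eq_empty_iff_forall_notMem]
        rintro G ⟨ha, hb⟩
        linarith
      rw [this, measure_empty]
    · have hsub : {G : {G : ℝ → ℝ // IsCDF a b G} | x < χ G ∧ χ G ≤ y} ⊆
          {G | χ G ≤ y} \ {G | χ G ≤ x} := by
        rintro G ⟨ha, hb⟩
        exact ⟨hb, not_le.2 ha⟩
      refine measure_mono_null hsub ?_
      have hd : τ ({G | χ G ≤ y} \ {G | χ G ≤ x})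
          = τ {G | χ G ≤ y} - τ {G | χ G ≤ x} :=
        measure_diff (show {G : {G : ℝ → ℝ // IsCDF a b G} | χ G ≤ x} ⊆
            {G | χ G ≤ y} from fun G hG => le_trans hG hxley)
          (hχm measurableSet_Iic).nullMeasurableSet (measure_ne_top τ _)
      rw [hd]
      exact tsub_eq_zero_of_le hyx
  have hEsub : ∀ᵐ G ∂τ, G ∈ {G : {G : ℝ → ℝ // IsCDF a b G} | x < χ₁ G ∧ χ₀ G ≤ y}
      → G ∈ {G : {G : ℝ → ℝ // IsCDF a b G} | x < χ G ∧ χ G ≤ y} := by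
    filter_upwards [hXχ] with G hG
    rintro ⟨ha, hb⟩
    exact ⟨lt_of_lt_of_le ha hG.1, le_trans hG.2 hb⟩
  have := measure_mono_ae (μ := τ) hEsub
  exact le_antisymm (le_trans this (le_of_eq hT)) (by simp)

end Joint

section JCDF

variable {τ : Measure {G : ℝ → ℝ // IsCDF a b G}} [IsProbabilityMeasure τ]
variable {χ₁ χ₀ : {G : ℝ → ℝ // IsCDF a b G} → ℝ}

lemma jointCDF (hq : q ∈ Set.Ioo (0:ℝ) 1) (hF : IsCDF a b F) (hab : a < b)
    (hf_pos : ∀ x ∈ Set.Icc a b, 0 < f x)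
    (hf_int : IntegrableOn f (Set.Icc a b))
    (hFf : ∀ x ∈ Set.Icc a b, F x = ∫ t in Set.Icc a x, f t)
    (hbary : ∀ x : ℝ, (∫ G, (G : {G : ℝ → ℝ // IsCDF a b G}).1 x ∂τ) = F x)
    (hχ₁m : Measurable χ₁) (hχ₀m : Measurable χ₀)
    (hχ₁q : ∀ G : {G : ℝ → ℝ // IsCDF a b G}, χ₁ G ∈ QSet a b q G.1)
    (hχ₀q : ∀ G : {G : ℝ → ℝ // IsCDF a b G}, χ₀ G ∈ QSet a b q G.1)
    (hH1 : ∀ z : ℝ, Hstep a b q F 1 z = (τ {G | χ₁ G ≤ z}).toReal)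
    (hH0 : ∀ z : ℝ, Hstep a b q F 0 z = (τ {G | χ₀ G ≤ z}).toReal)
    (himp : ∀ p ∈ Set.Icc (0:ℝ) 1, ImplementedBy a b q τ (Hstep a b q F p))
    (x y : ℝ) :
    τ {G | χ₁ G ≤ x ∧ χ₀ G ≤ y}
      = ENNReal.ofReal (min (min (F x / q) 1) (max 0 ((F y - q) / (1 - q)))) := by
  have hFa : F a = 0 := cdf_Fa hF hFf hab.le
  have h1q : (0:ℝ) < 1 - q := by linarith [hq.2]
  set α := min (F x / q) 1 with hα
  set β := max 0 ((F y - q) / (1 - q)) with hβ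
  have hα0 : 0 ≤ α := le_min (div_nonneg (cdf_nonneg hF x) hq.1.le) zero_le_one
  have hsm : MeasurableSet {G : {G : ℝ → ℝ // IsCDF a b G} | χ₁ G ≤ x} :=
    hχ₁m measurableSet_Iic
  have htm : MeasurableSet {G : {G : ℝ → ℝ // IsCDF a b G} | χ₀ G ≤ y} :=
    hχ₀m measurableSet_Iic
  have hset : {G : {G : ℝ → ℝ // IsCDF a b G} | χ₁ G ≤ x ∧ χ₀ G ≤ y}
      = {G | χ₁ G ≤ x} ∩ {G | χ₀ G ≤ y} := rfl
  rcases le_or_gt α β with hc | hc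
  · rw [min_eq_left hc]
    have hkey : τ ({G : {G : ℝ → ℝ // IsCDF a b G} | χ₁ G ≤ x}
        \ {G | χ₀ G ≤ y}) = 0 := by
      rcases le_or_gt b y with hby | hyb
      · have hempty : {G : {G : ℝ → ℝ // IsCDF a b G} | χ₁ G ≤ x}
            \ {G | χ₀ G ≤ y} = ∅ := by
          rw [Set.eq_empty_iff_forall_notMem]
          rintro G ⟨h1, h2⟩
          exact h2 (le_trans (hχ₀q G).1.2 hby)
        rw [hempty, measure_empty]
      · rcases le_or_gt α 0 with hα0' | hα0'
        · have hs0 : τ {G : {G : ℝ → ℝ // IsCDF a b G} | χ₁ G ≤ x} = 0 := by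
            rw [marg1 hq hF hab hf_pos hf_int hFf hH1, ← hα]
            exact ENNReal.ofReal_eq_zero.2 hα0'
          exact measure_mono_null Set.diff_subset hs0
        · have hFxq : F x < q := by
            by_contra hcq
            push_neg at hcq
            have hα1 : α = 1 := by
              rw [hα]
              exact min_eq_right (by rw [le_div_iff₀ hq.1, one_mul]; exact hcq)
            have hβ1 : (1:ℝ) ≤ β := hα1 ▸ hc
            have hv1 : (1:ℝ) ≤ (F y - q) / (1 - q) := by
              by_contra hv
              push_neg at hv
              have : β < 1 := by rw [hβ]; exact max_lt one_pos hv
              linarith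
            have hFy1 : (1:ℝ) ≤ F y := by
              rw [le_div_iff₀ h1q] at hv1
              linarith
            have hay : a < y := by
              by_contra hya
              push_neg at hya
              have := cdf_le_a hF hFa hya
              linarith
            have := F_strict hF hf_pos hf_int hFf hay.le hyb le_rfl
            rw [hF.2.2.2 b le_rfl] at this
            linarith [cdf_le_one hF y]
          have hαval : α = F x / q := by
            rw [hα]
            exact min_eq_left (by rw [div_le_one hq.1]; linarith)
          have hFx0 : 0 < F x := by
            have h := mul_pos (hαval ▸ hα0') hq.1
            rwa [div_mul_cancel₀ _ (ne_of_gt hq.1)] at h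
          have hvβ : α ≤ (F y - q) / (1 - q) := by
            rcases le_or_gt ((F y - q) / (1 - q)) 0 with hv | hv
            · rw [hβ, max_eq_left hv] at hc
              linarith
            · rw [hβ, max_eq_right hv.le] at hc
              exact hc
          have hFy : q + (1 - q) * α ≤ F y := by
            rw [le_div_iff₀ h1q] at hvβ
            linarith
          have hay : a < y := by
            by_contra hya
            push_neg at hya
            have := cdf_le_a hF hFa hya
            nlinarith [hq.1]
          have hsub : {G : {G : ℝ → ℝ // IsCDF a b G} | χ₁ G ≤ x}
              \ {G | χ₀ G ≤ y} ⊆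
              ⋃ (r : ℚ) (_ : y < (r:ℝ) ∧ (r:ℝ) < b),
                {G | χ₁ G ≤ x ∧ (r:ℝ) < χ₀ G} := by
            rintro G ⟨h1, h2⟩
            have h2' : y < χ₀ G := not_le.1 h2
            obtain ⟨r, hr1, hr2⟩ := exists_rat_btwn h2'
            have hrb : (r:ℝ) < b := lt_of_lt_of_le hr2 (hχ₀q G).1.2
            exact Set.mem_iUnion.2 ⟨r, Set.mem_iUnion.2 ⟨⟨hr1, hrb⟩, h1, hr2⟩⟩
          refine measure_mono_null hsub (measure_iUnion_null fun r => ?_)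
          rw [Set.iUnion_eq_if]
          split_ifs with hr
          · obtain ⟨hyr, hrb⟩ := hr
            have hFr : q + (1 - q) * α < F r :=
              lt_of_le_of_lt hFy (F_strict hF hf_pos hf_int hFf hay.le hyr hrb.le)
            have hP0 : 0 ≤ (F (r:ℝ) - q) / (1 - q) := by
              apply div_nonneg _ h1q.le
              nlinarith [hq.1]
            have hP1 : (F (r:ℝ) - q) / (1 - q) ≤ 1 := by
              rw [div_le_one h1q]
              linarith [cdf_le_one hF (r:ℝ)]
            have hαP : α < (F (r:ℝ) - q) / (1 - q) := by
              rw [lt_div_iff₀ h1q]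
              linarith
            have h1' : F x < q * ((F (r:ℝ) - q) / (1 - q)) := by
              have hFxα : F x = q * α := by
                rw [hαval, mul_div_cancel₀ _ (ne_of_gt hq.1)]
              rw [hFxα]
              exact (mul_lt_mul_iff_right₀ hq.1).2 hαP
            have h2' : q + (1 - q) * ((F (r:ℝ) - q) / (1 - q)) ≤ F r := by
              rw [mul_div_cancel₀ _ (ne_of_gt h1q)]
              linarith
            exact nullA hq hF hab hFf hbary hχ₁m hχ₀m hχ₁q hχ₀q hH1 hH0 himp
              x r ⟨hP0, hP1⟩ h1' h2'
          · exact measure_empty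
    have hadd := measure_inter_add_diff (μ := τ)
      {G : {G : ℝ → ℝ // IsCDF a b G} | χ₁ G ≤ x} htm
    rw [hkey, add_zero] at hadd
    rw [hset, hadd, marg1 hq hF hab hf_pos hf_int hFf hH1, ← hα]
  · rw [min_eq_right hc.le]
    have hkey : τ ({G : {G : ℝ → ℝ // IsCDF a b G} | χ₀ G ≤ y}
        \ {G | χ₁ G ≤ x}) = 0 := by
      have hnb := nullB hq hF hab hf_pos hf_int hFf hbary hχ₁m hχ₀m hχ₁q hχ₀q
        hH1 hH0 himp x y (by rw [← hα, ← hβ]; exact hc)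
      refine measure_mono_null (fun G hG => ?_) hnb
      exact ⟨not_le.1 hG.2, hG.1⟩
    have hadd := measure_inter_add_diff (μ := τ)
      {G : {G : ℝ → ℝ // IsCDF a b G} | χ₀ G ≤ y} hsm
    rw [hkey, add_zero] at hadd
    rw [hset, Set.inter_comm, hadd, marg0 hq hF hab hFf hH0, ← hβ]

end JCDF

section Unif

def Phi (q : ℝ) : ℝ × ℝ → ℝ → ℝ := fun pr θ =>
  q * (if pr.1 ≤ θ then 1 else 0) + (1 - q) * (if pr.2 ≤ θ then 1 else 0)

lemma Phi_measurable (q : ℝ) : Measurable (Phi q) :=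
  measurable_pi_lambda _ fun θ =>
    ((measurable_const.mul (Measurable.ite
        (measurableSet_le measurable_fst measurable_const)
        measurable_const measurable_const)).add
      (measurable_const.mul (Measurable.ite
        (measurableSet_le measurable_snd measurable_const)
        measurable_const measurable_const)))

def psi (a b : ℝ) (F : ℝ → ℝ) : ℝ → ℝ := fun r => ginv a b F (min r 1)

lemma psi_mono (hF : IsCDF a b F) (hab : a ≤ b) : Monotone (psi a b F) :=
  fun r r' h =>
    ginv_mono hF hab (min_le_min_right 1 h) (min_le_right _ _)

def pair2 (a b q : ℝ) (F : ℝ → ℝ) : ℝ → ℝ × ℝ := fun ω =>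
  (psi a b F ω, psi a b F (q + (1 - q) * ω / q))

lemma pair2_measurable (hF : IsCDF a b F) (hab : a ≤ b) :
    Measurable (pair2 a b q F) := by
  have hψ : Measurable (psi a b F) := (psi_mono hF hab).measurable
  exact hψ.prodMk (hψ.comp (((measurable_id.const_mul (1 - q)).div_const q).const_add q))

lemma unif_rect (hq : q ∈ Set.Ioo (0:ℝ) 1) (hF : IsCDF a b F) (hab : a < b)
    (hFa : F a = 0) (x y : ℝ) :
    Measure.map (pair2 a b q F)
      ((ENNReal.ofReal q)⁻¹ • volume.restrict (Set.Icc (0:ℝ) q))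
      (Set.Iic x ×ˢ Set.Iic y)
    = ENNReal.ofReal (min (min (F x / q) 1) (max 0 ((F y - q) / (1 - q)))) := by
  have h1q : (0:ℝ) < 1 - q := by linarith [hq.2]
  have hmeas := pair2_measurable (q := q) hF hab.le
  have hrectm : MeasurableSet (Set.Iic x ×ˢ Set.Iic y) :=
    measurableSet_Iic.prod measurableSet_Iic
  rw [Measure.map_apply hmeas hrectm, Measure.smul_apply,
    Measure.restrict_apply (hmeas hrectm)]
  set m := min q (min (F x) (q * (F y - q) / (1 - q))) with hm
  have hvol : volume (pair2 a b q F ⁻¹' (Set.Iic x ×ˢ Set.Iic y) ∩ Set.Icc 0 q)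
      = ENNReal.ofReal m := by
    have hub : pair2 a b q F ⁻¹' (Set.Iic x ×ˢ Set.Iic y) ∩ Set.Icc 0 q ⊆
        {(0:ℝ)} ∪ Set.Ioc 0 m := by
      rintro ω ⟨hpre, hω0, hωq⟩
      rcases eq_or_lt_of_le hω0 with h0 | h0
      · exact Or.inl (by simp [← h0])
      right
      simp only [Set.mem_preimage, pair2, psi, Set.mem_prod, Set.mem_Iic] at hpre
      obtain ⟨hpx, hpy⟩ := hpre
      have hω1 : min ω 1 = ω := min_eq_left (hωq.trans hq.2.le)
      have harg : q + (1 - q) * ω / q ≤ 1 := by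
        have : (1 - q) * ω / q ≤ 1 - q := by
          rw [div_le_iff₀ hq.1]
          nlinarith
        linarith
      have harg1 : min (q + (1 - q) * ω / q) 1 = q + (1 - q) * ω / q :=
        min_eq_left harg
      refine ⟨h0, le_min hωq (le_min ?_ ?_)⟩
      · -- ω ≤ F x
        have hgg : ω ≤ F (ginv a b F ω) := by
          have := F_ginv_ge hF hab.le (hωq.trans hq.2.le)
          exact this
        calc ω ≤ F (ginv a b F ω) := hgg
        _ ≤ F x := hF.1 (by rw [hω1] at hpx; exact hpx)
      · -- ω ≤ q (F y - q)/(1-q)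
        have hgg : q + (1 - q) * ω / q ≤ F (ginv a b F (q + (1 - q) * ω / q)) :=
          F_ginv_ge hF hab.le harg
        have hFy : q + (1 - q) * ω / q ≤ F y := by
          calc q + (1 - q) * ω / q ≤ F (ginv a b F (q + (1 - q) * ω / q)) := hgg
          _ ≤ F y := hF.1 (by rw [harg1] at hpy; exact hpy)
        rw [le_div_iff₀ h1q]
        have h' : (1 - q) * ω / q ≤ F y - q := by linarith
        rw [div_le_iff₀ hq.1] at h'
        nlinarith
    have hlb : Set.Ioc 0 m ⊆
        pair2 a b q F ⁻¹' (Set.Iic x ×ˢ Set.Iic y) ∩ Set.Icc 0 q := by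
      rintro ω ⟨h0, hωm⟩
      have hωq : ω ≤ q := hωm.trans (min_le_left _ _)
      have hωFx : ω ≤ F x := hωm.trans ((min_le_right _ _).trans (min_le_left _ _))
      have hωFy : ω ≤ q * (F y - q) / (1 - q) :=
        hωm.trans ((min_le_right _ _).trans (min_le_right _ _))
      have hω1 : min ω 1 = ω := min_eq_left (hωq.trans hq.2.le)
      have harg : q + (1 - q) * ω / q ≤ 1 := by
        have : (1 - q) * ω / q ≤ 1 - q := by
          rw [div_le_iff₀ hq.1]
          nlinarith
        linarith
      refine ⟨?_, h0.le, hωq⟩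
      simp only [Set.mem_preimage, pair2, psi, Set.mem_prod, Set.mem_Iic]
      constructor
      · rw [hω1]
        exact ginv_le hF hFa hab.le hωFx h0
      · rw [min_eq_left harg]
        have hFy : q + (1 - q) * ω / q ≤ F y := by
          rw [le_div_iff₀ h1q] at hωFy
          have h' : (1 - q) * ω ≤ q * (F y - q) := by nlinarith
          have h'' : (1 - q) * ω / q ≤ F y - q := by
            rw [div_le_iff₀ hq.1]
            nlinarith
          linarith
        have hargpos : 0 < q + (1 - q) * ω / q := by
          have h'' : 0 ≤ (1 - q) * ω / q :=
            div_nonneg (mul_nonneg h1q.le h0.le) hq.1.le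
          linarith [hq.1]
        exact ginv_le hF hFa hab.le hFy hargpos
    have hioc : volume (Set.Ioc (0:ℝ) m) = ENNReal.ofReal m := by
      rw [Real.volume_Ioc, sub_zero]
    refine le_antisymm ?_ ?_
    · refine le_trans (measure_mono hub) ?_
      refine le_trans (measure_union_le _ _) ?_
      rw [Real.volume_singleton, zero_add, hioc]
    · rw [← hioc]
      exact measure_mono hlb
  rw [hvol, smul_eq_mul]
  have hα0 : 0 ≤ min (F x / q) 1 := le_min (div_nonneg (cdf_nonneg hF x) hq.1.le) zero_le_one
  rcases le_or_gt 0 ((F y - q) / (1 - q)) with hv | hv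
  · rw [max_eq_right hv]
    have hmeq : m = q * min (min (F x / q) 1) ((F y - q) / (1 - q)) := by
      rw [mul_min_of_nonneg _ _ hq.1.le, mul_min_of_nonneg _ _ hq.1.le]
      rw [mul_div_cancel₀ _ (ne_of_gt hq.1), mul_one, hm, mul_div_assoc]
      rw [min_comm q (min (F x) (q * ((F y - q) / (1 - q)))), min_assoc,
        min_comm (q * ((F y - q) / (1 - q))) q, ← min_assoc]
    rw [hmeq, ENNReal.ofReal_mul hq.1.le, ← mul_assoc,
      ENNReal.inv_mul_cancel (by simp [hq.1] : ENNReal.ofReal q ≠ 0)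
        ENNReal.ofReal_ne_top, one_mul]
  · rw [max_eq_left hv.le, min_eq_right hα0]
    have hm0 : m < 0 := by
      have : q * (F y - q) / (1 - q) < 0 := by
        apply div_neg_of_neg_of_pos _ h1q
        have hFyq : F y - q < 0 := by
          by_contra hcc
          push_neg at hcc
          exact absurd (div_nonneg hcc h1q.le) (not_le.2 hv)
        exact mul_neg_of_pos_of_neg hq.1 hFyq
      calc m ≤ q * (F y - q) / (1 - q) :=
        (min_le_right _ _).trans (min_le_right _ _)
      _ < 0 := this
    rw [ENNReal.ofReal_eq_zero.2 hm0.le, ENNReal.ofReal_zero, mul_zero]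

end Unif

section Ext

variable {τ : Measure {G : ℝ → ℝ // IsCDF a b G}} [IsProbabilityMeasure τ]
variable {χ₁ χ₀ : {G : ℝ → ℝ // IsCDF a b G} → ℝ}

lemma map_pair_eq (hq : q ∈ Set.Ioo (0:ℝ) 1) (hF : IsCDF a b F) (hab : a < b)
    (hf_pos : ∀ x ∈ Set.Icc a b, 0 < f x)
    (hf_int : IntegrableOn f (Set.Icc a b))
    (hFf : ∀ x ∈ Set.Icc a b, F x = ∫ t in Set.Icc a x, f t)
    (hbary : ∀ x : ℝ, (∫ G, (G : {G : ℝ → ℝ // IsCDF a b G}).1 x ∂τ) = F x)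
    (hχ₁m : Measurable χ₁) (hχ₀m : Measurable χ₀)
    (hχ₁q : ∀ G : {G : ℝ → ℝ // IsCDF a b G}, χ₁ G ∈ QSet a b q G.1)
    (hχ₀q : ∀ G : {G : ℝ → ℝ // IsCDF a b G}, χ₀ G ∈ QSet a b q G.1)
    (hH1 : ∀ z : ℝ, Hstep a b q F 1 z = (τ {G | χ₁ G ≤ z}).toReal)
    (hH0 : ∀ z : ℝ, Hstep a b q F 0 z = (τ {G | χ₀ G ≤ z}).toReal)
    (himp : ∀ p ∈ Set.Icc (0:ℝ) 1, ImplementedBy a b q τ (Hstep a b q F p)) :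
    Measure.map (fun G : {G : ℝ → ℝ // IsCDF a b G} => (χ₁ G, χ₀ G)) τ
      = Measure.map (pair2 a b q F)
          ((ENNReal.ofReal q)⁻¹ • volume.restrict (Set.Icc (0:ℝ) q)) := by
  have hFa : F a = 0 := cdf_Fa hF hFf hab.le
  have hpairτ : Measurable fun G : {G : ℝ → ℝ // IsCDF a b G} => (χ₁ G, χ₀ G) :=
    hχ₁m.prodMk hχ₀m
  have hmeas2 := pair2_measurable (q := q) hF hab.le
  set C : Set (Set (ℝ × ℝ)) :=
    Set.image2 (· ×ˢ ·) (Set.range (Set.Iic : ℝ → Set ℝ))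
      (Set.range (Set.Iic : ℝ → Set ℝ)) with hC
  have hspan : IsCountablySpanning (Set.range (Set.Iic : ℝ → Set ℝ)) := by
    refine ⟨fun n => Set.Iic n, fun n => Set.mem_range_self _, ?_⟩
    ext z
    simp only [Set.mem_iUnion, Set.mem_Iic, Set.mem_univ, iff_true]
    obtain ⟨n, hn⟩ := exists_nat_ge z
    exact ⟨n, hn⟩
  have hr : (inferInstance : MeasurableSpace ℝ)
      = MeasurableSpace.generateFrom (Set.range (Set.Iic : ℝ → Set ℝ)) := by
    rw [BorelSpace.measurable_eq (α := ℝ), borel_eq_generateFrom_Iic]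
  have hgen : (inferInstance : MeasurableSpace (ℝ × ℝ))
      = MeasurableSpace.generateFrom C := by
    have h0 : (inferInstance : MeasurableSpace (ℝ × ℝ))
        = MeasurableSpace.prod (inferInstance : MeasurableSpace ℝ)
          (inferInstance : MeasurableSpace ℝ) := rfl
    rw [h0, hr]
    exact generateFrom_prod_eq hspan hspan
  have hpi : IsPiSystem C := by
    rw [hC]
    rintro s ⟨s1, hs1, t1, ht1, rfl⟩ t ⟨s2, hs2, t2, ht2, rfl⟩ _
    obtain ⟨x1, rfl⟩ := hs1
    obtain ⟨y1, rfl⟩ := ht1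
    obtain ⟨x2, rfl⟩ := hs2
    obtain ⟨y2, rfl⟩ := ht2
    rw [Set.prod_inter_prod, Set.Iic_inter_Iic, Set.Iic_inter_Iic]
    exact Set.mem_image2_of_mem (Set.mem_range_self _) (Set.mem_range_self _)
  haveI : IsProbabilityMeasure
      (Measure.map (fun G : {G : ℝ → ℝ // IsCDF a b G} => (χ₁ G, χ₀ G)) τ) :=
    Measure.isProbabilityMeasure_map hpairτ.aemeasurable
  refine MeasureTheory.ext_of_generate_finite C hgen hpi ?_ ?_
  · rintro s ⟨s1, ⟨x, rfl⟩, t1, ⟨y, rfl⟩, rfl⟩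
    rw [Measure.map_apply hpairτ (measurableSet_Iic.prod measurableSet_Iic)]
    have hpre : (fun G : {G : ℝ → ℝ // IsCDF a b G} => (χ₁ G, χ₀ G)) ⁻¹'
        (Set.Iic x ×ˢ Set.Iic y) = {G | χ₁ G ≤ x ∧ χ₀ G ≤ y} := by
      ext G
      simp [Set.mem_prod]
    rw [hpre,
      jointCDF hq hF hab hf_pos hf_int hFf hbary hχ₁m hχ₀m hχ₁q hχ₀q hH1 hH0 himp x y]
    exact (unif_rect hq hF hab hFa x y).symm
  · rw [Measure.map_apply hpairτ MeasurableSet.univ, Set.preimage_univ, measure_univ]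
    rw [Measure.map_apply hmeas2 MeasurableSet.univ, Set.preimage_univ]
    rw [Measure.smul_apply, Measure.restrict_apply_univ, Real.volume_Icc, sub_zero,
      smul_eq_mul]
    exact (ENNReal.inv_mul_cancel (by simp [hq.1]) ENNReal.ofReal_ne_top).symm

end Ext

end QMU

/-- the `q`-quantile matching experiment is the unique experiment
implementing every `H_p`: the law of any such `τ` (as a measure on functions) is the
pushforward of the normalized uniform measure on `[0,q]` under
`ω ↦ q·δ_{F⁻¹(ω)} + (1-q)·δ_{F⁻¹(q+(1-q)ω/q)}`. -/
theorem quantile_matching_unique (a b q : ℝ) (hab : a < b)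
    (hq : q ∈ Set.Ioo (0 : ℝ) 1) (F f : ℝ → ℝ) (hF : IsCDF a b F)
    (hf_pos : ∀ x ∈ Set.Icc a b, 0 < f x)
    (hf_int : IntegrableOn f (Set.Icc a b))
    (hFf : ∀ x ∈ Set.Icc a b, F x = ∫ t in Set.Icc a x, f t)
    (τ : Measure {G : ℝ → ℝ // IsCDF a b G}) [IsProbabilityMeasure τ]
    (hbary : ∀ x : ℝ, (∫ G, (G : {G : ℝ → ℝ // IsCDF a b G}).1 x ∂τ) = F x)
    (himp : ∀ p ∈ Set.Icc (0 : ℝ) 1, ImplementedBy a b q τ (Hstep a b q F p)) :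
    Measure.map (fun G : {G : ℝ → ℝ // IsCDF a b G} => (G.1 : ℝ → ℝ)) τ
      = Measure.map (fun ω : ℝ => fun θ : ℝ =>
          q * (if ginv a b F ω ≤ θ then (1 : ℝ) else 0)
            + (1 - q) * (if ginv a b F (q + (1 - q) * ω / q) ≤ θ then (1 : ℝ) else 0))
          ((ENNReal.ofReal q)⁻¹ • volume.restrict (Set.Icc (0 : ℝ) q)) := by
  obtain ⟨χ₁, hχ₁m, hχ₁q, hH1⟩ := himp 1 ⟨zero_le_one, le_rfl⟩
  obtain ⟨χ₀, hχ₀m, hχ₀q, hH0⟩ := himp 0 ⟨le_rfl, zero_le_one⟩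
  have hrep := QMU.ae_rep hq hF hab hf_pos hf_int hFf hbary hχ₁m hχ₀m hχ₁q hχ₀q hH1 hH0
  have hpairτ : Measurable fun G : {G : ℝ → ℝ // IsCDF a b G} => (χ₁ G, χ₀ G) :=
    hχ₁m.prodMk hχ₀m
  have hfe : (fun G : {G : ℝ → ℝ // IsCDF a b G} => (G.1 : ℝ → ℝ))
      =ᵐ[τ] (QMU.Phi q ∘ fun G => (χ₁ G, χ₀ G)) := by
    filter_upwards [hrep] with G hG
    funext θ
    exact hG θ
  rw [Measure.map_congr hfe]
  rw [← Measure.map_map (QMU.Phi_measurable q) hpairτ]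
  rw [QMU.map_pair_eq hq hF hab hf_pos hf_int hFf hbary hχ₁m hχ₀m hχ₁q hχ₀q hH1 hH0 himp]
  rw [Measure.map_map (QMU.Phi_measurable q) (QMU.pair2_measurable hF hab.le)]
  refine Measure.map_congr ?_
  have hae : ∀ᵐ ω ∂(volume.restrict (Set.Icc (0:ℝ) q)),
      (QMU.Phi q ∘ QMU.pair2 a b q F) ω = (fun ω : ℝ => fun θ : ℝ =>
        q * (if ginv a b F ω ≤ θ then (1 : ℝ) else 0)
          + (1 - q) * (if ginv a b F (q + (1 - q) * ω / q) ≤ θ then (1 : ℝ) else 0)) ω := by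
    filter_upwards [ae_restrict_mem measurableSet_Icc] with ω hω
    funext θ
    have hω1 : min ω 1 = ω := min_eq_left (hω.2.trans hq.2.le)
    have harg : min (q + (1 - q) * ω / q) 1 = q + (1 - q) * ω / q := by
      refine min_eq_left ?_
      have h1 : (1 - q) * ω / q ≤ 1 - q := by
        rw [div_le_iff₀ hq.1]
        nlinarith [hq.1, hq.2, hω.1, hω.2]
      linarith
    simp only [QMU.Phi, QMU.pair2, QMU.psi, Function.comp_apply, hω1, harg]
  exact Measure.ae_smul_measure hae _
end
end
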